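/- arXiv:2402.02673 — 7 statements merged into one kernel-verified Lean document; each statement's English description precedes it below -/
import Mathlib

section
/- Let t ≥ 1 and let 𝓡 = (R_1, …, R_t) be a t-stage multi-winner voting rule. If R_r satisfies Solid Coalition for every r ∈ [t], then 𝓡 satisfies Solid Coalition; that is, for every election E = (C,V) with n voters and every vector v⃗ = (k_1, …, k_t), if at least n/k_t voters rank a candidate c first, then c belongs to every committee in 𝓡(E, v⃗). -/
/-- A multi-winner voting rule: candidate pool, list of voters (given by injective
ranking functions, smaller value = more preferred), target size ↦ winning committees. -/
abbrev MWRule (α : Type) : Type := Finset α → List (α → ℕ) → ℕ → Set (Finset α)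

/-- A multi-winner voting rule outputs committees of the prescribed size drawn
from the candidate pool. -/
def IsMWRule {α : Type} (R : MWRule α) : Prop :=
  ∀ (C : Finset α) (V : List (α → ℕ)) (k : ℕ), ∀ S ∈ R C V k, S ⊆ C ∧ S.card = k

/-- Every voter of `V` has a strict (injective) preference on the candidate set `C`. -/
def StrictPrefs {α : Type} (C : Finset α) (V : List (α → ℕ)) : Prop :=
  ∀ v ∈ V, Set.InjOn v ↑C

/-- Voter `v` ranks candidate `c` first in the pool `C`. -/
def RanksFirst {α : Type} (v : α → ℕ) (C : Finset α) (c : α) : Prop :=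
  c ∈ C ∧ ∀ c' ∈ C, c' ≠ c → v c < v c'

instance {α : Type} [DecidableEq α] (v : α → ℕ) (C : Finset α) (c : α) :
    Decidable (RanksFirst v C c) :=
  inferInstanceAs (Decidable (c ∈ C ∧ ∀ c' ∈ C, c' ≠ c → v c < v c'))

/-- The number of voters in `V` ranking candidate `c` first in the pool `C`. -/
def firstCount {α : Type} [DecidableEq α] (V : List (α → ℕ)) (C : Finset α) (c : α) : ℕ :=
  V.countP fun v => decide (RanksFirst v C c)

/-- Solid Coalition: whenever at least `n/k` voters rank some candidate `c` first,
`c` belongs to every winning committee. -/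
def SolidCoalition {α : Type} [DecidableEq α] (R : MWRule α) : Prop :=
  ∀ (C : Finset α) (V : List (α → ℕ)), StrictPrefs C V → V ≠ [] →
    ∀ k : ℕ, 1 ≤ k → k < C.card →
      ∀ c : α, V.length ≤ k * firstCount V C c →
        ∀ S ∈ R C V k, c ∈ S

/-- The winning committees of a multi-stage rule, specified by a list of
(rule, target size) pairs: the winning committee of each stage is the candidate
pool for the next stage. -/
def MultiStageWinners {α : Type} :
    List (MWRule α × ℕ) → Finset α → List (α → ℕ) → Set (Finset α)
  | [], C, _ => {C}
  | (R, k) :: rest, C, V => {S | ∃ S₁ ∈ R C V k, S ∈ MultiStageWinners rest S₁ V}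

/-
Induct on the stages. At each stage the current pool still contains `c`, so shrinking the
pool can only increase the number of voters ranking `c` first, while the target sizes
decrease towards `k_t`; hence the quota `n / k_r` is met at every stage `r` and Solid
Coalition of `R_r` keeps `c` in the committee passed on to the next stage.
-/

theorem List.map_snd_zip_prefix {α β : Type*} (l₁ : List α) (l₂ : List β) :
    (l₁.zip l₂).map Prod.snd <+: l₂ := by
  induction l₁ generalizing l₂ with
  | nil => simp
  | cons a l₁ ih =>
    cases l₂ with
    | nil => simp
    | cons b l₂ => simpa using ih l₂

section Election

variable {α : Type} {C S : Finset α} {V : List (α → ℕ)} {c : α}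

theorem StrictPrefs.mono (hV : StrictPrefs C V) (hS : S ⊆ C) : StrictPrefs S V :=
  fun v hv => (hV v hv).mono (by exact_mod_cast hS)

theorem RanksFirst.mono {v : α → ℕ} (h : RanksFirst v C c) (hc : c ∈ S) (hS : S ⊆ C) :
    RanksFirst v S c :=
  ⟨hc, fun c' hc' hne => h.2 c' (hS hc') hne⟩

variable [DecidableEq α]

theorem firstCount_le_firstCount_of_subset (hc : c ∈ S) (hS : S ⊆ C) :
    firstCount V C c ≤ firstCount V S c :=
  List.countP_mono_left fun _ _ h => decide_eq_true ((of_decide_eq_true h).mono hc hS)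

theorem mem_of_firstCount_pos (h : 0 < firstCount V C c) : c ∈ C := by
  obtain ⟨v, -, hv⟩ := List.countP_pos_iff.mp h
  exact (of_decide_eq_true hv).1

theorem pos_and_firstCount_pos_of_length_le_mul {k : ℕ} (hVne : V ≠ [])
    (h : V.length ≤ k * firstCount V C c) : 0 < k ∧ 0 < firstCount V C c :=
  CanonicallyOrderedAdd.mul_pos.mp (h.trans_lt' (List.length_pos_iff.mpr hVne))

theorem mem_of_mem_multiStageWinners {stages : List (MWRule α × ℕ)}
    (hrule : ∀ p ∈ stages, IsMWRule p.1) (hSC : ∀ p ∈ stages, SolidCoalition p.1)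
    (hV : StrictPrefs C V) (hVne : V ≠ [])
    (hchain : List.IsChain (· > ·) (C.card :: stages.map Prod.snd))
    {q : ℕ} (hq : ∀ p ∈ stages, q ≤ p.2) (hc : V.length ≤ q * firstCount V C c) :
    ∀ S ∈ MultiStageWinners stages C V, c ∈ S := by
  induction stages generalizing C with
  | nil =>
    rintro S rfl
    exact mem_of_firstCount_pos (pos_and_firstCount_pos_of_length_le_mul hVne hc).2
  | cons stage stages ih =>
    obtain ⟨R, k⟩ := stage
    rintro S ⟨S₁, hS₁, hS⟩
    obtain ⟨hkC, hchain⟩ := List.isChain_cons_cons.mp hchain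
    have hck : V.length ≤ k * firstCount V C c :=
      hc.trans (Nat.mul_le_mul_right _ (hq _ List.mem_cons_self))
    have hcS₁ : c ∈ S₁ :=
      hSC _ List.mem_cons_self C V hV hVne k
        (pos_and_firstCount_pos_of_length_le_mul hVne hck).1 hkC c hck S₁ hS₁
    obtain ⟨hS₁C, hS₁k⟩ := hrule _ List.mem_cons_self C V k S₁ hS₁
    refine ih (fun p hp => hrule p (.tail _ hp)) (fun p hp => hSC p (.tail _ hp))
      (hV.mono hS₁C) (hS₁k ▸ hchain) (fun p hp => hq p (.tail _ hp)) ?_ S hS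
    exact hc.trans (Nat.mul_le_mul_left _ (firstCount_le_firstCount_of_subset hcS₁ hS₁C))

end Election

theorem multistage_solid_coalition_general {α : Type} [DecidableEq α]
    (Rs : List (MWRule α)) (ks : List ℕ)
    (hkne : ks ≠ [])
    (hrule : ∀ R ∈ Rs, IsMWRule R) (hSC : ∀ R ∈ Rs, SolidCoalition R)
    (C : Finset α) (V : List (α → ℕ)) (hV : StrictPrefs C V) (hVne : V ≠ [])
    (hchain : List.Chain (· > ·) C.card ks)
    (c : α) (hc : V.length ≤ ks.getLast hkne * firstCount V C c) :
    ∀ S ∈ MultiStageWinners (Rs.zip ks) C V, c ∈ S := by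
  have hks : ks.Pairwise (· ≥ ·) :=
    (List.isChain_iff_pairwise.mp (List.isChain_cons.mp hchain).2).imp le_of_lt
  refine mem_of_mem_multiStageWinners
    (fun p hp => hrule p.1 (List.of_mem_zip hp).1) (fun p hp => hSC p.1 (List.of_mem_zip hp).1)
    hV hVne ?_ (fun p hp => hks.rel_getLast (List.of_mem_zip hp).2) hc
  exact hchain.prefix (List.cons_prefix_cons.mpr ⟨rfl, List.map_snd_zip_prefix Rs ks⟩)

/-- Solid Coalition is preserved in multi-stage voting: if every
stage rule `R_r` of the `t`-stage rule `𝓡 = (R_1, …, R_t)` (`t ≥ 1`) satisfies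
Solid Coalition, then for every election `E = (C,V)` and stage vector
`v⃗ = (k_1, …, k_t)` with `|C| > k_1 > … > k_t ≥ 1`, whenever at least `n/k_t`
voters rank a candidate `c` first, `c` belongs to every committee in `𝓡(E, v⃗)`. -/
theorem multistage_solid_coalition {α : Type} [DecidableEq α]
    (Rs : List (MWRule α)) (ks : List ℕ)
    (hRne : Rs ≠ []) (hkne : ks ≠ []) (hlen : ks.length = Rs.length)
    (hrule : ∀ R ∈ Rs, IsMWRule R) (hSC : ∀ R ∈ Rs, SolidCoalition R)
    (C : Finset α) (V : List (α → ℕ)) (hV : StrictPrefs C V) (hVne : V ≠ [])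
    (hchain : List.Chain (· > ·) C.card ks) (hpos : ∀ k ∈ ks, 1 ≤ k)
    (c : α) (hc : V.length ≤ ks.getLast hkne * firstCount V C c) :
    ∀ S ∈ MultiStageWinners (Rs.zip ks) C V, c ∈ S :=
  multistage_solid_coalition_general Rs ks hkne hrule hSC C V hV hVne hchain c hc
end

section
/- Let t ≥ 2, β ∈ {ℓ_1, ℓ_max}, and let 𝓡 be a rational t-stage (β, γ⃗)-rule. Then 𝓡 does not satisfy Committee Monotonicity: there exist an election E and t-dimensional vectors v⃗_1 = (k^1_1,…,k^1_t) and v⃗_2 = (k^2_1,…,k^2_t) with k^1_t + 1 = k^2_t for which the committee-monotonicity conditions fail. -/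
/-- Position (1-indexed) of candidate `c` in voter `v`'s induced ranking on the
pool `C` (voters are ranking functions, smaller value = more preferred). -/
def posIn {α : Type} (v : α → ℕ) (C : Finset α) (c : α) : ℕ :=
  (C.filter fun c' => v c' ≤ v c).card

/-- The two norms parameterizing score-based rules. -/
inductive ScoreNorm : Type
  | l1
  | lmax

/-- Voter `v`'s score for a committee `S` on the pool `C` with target size `k`,
under the `(β, γ)`-rule (`γ m k p` is the position score of position `p` for
`m` candidates and target size `k`). -/
noncomputable def voterScore {α : Type} (β : ScoreNorm) (γ : ℕ → ℕ → ℕ → ℝ)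
    (C : Finset α) (k : ℕ) (v : α → ℕ) (S : Finset α) : ℝ :=
  match β with
  | .l1 => ∑ c ∈ S, γ C.card k (posIn v C c)
  | .lmax => sSup ((fun c => γ C.card k (posIn v C c)) '' (S : Set α))

/-- Total score `Σ_{v ∈ V} f_v(S)` of a committee. -/
noncomputable def totalScore {α : Type} (β : ScoreNorm) (γ : ℕ → ℕ → ℕ → ℝ)
    (C : Finset α) (V : List (α → ℕ)) (k : ℕ) (S : Finset α) : ℝ :=
  (V.map fun v => voterScore β γ C k v S).sum

/-- Winning committees of the single-stage `(β, γ)`-rule: the size-`k` committees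
maximizing the total score. -/
def scoreWinners {α : Type} (β : ScoreNorm) (γ : ℕ → ℕ → ℕ → ℝ)
    (C : Finset α) (V : List (α → ℕ)) (k : ℕ) : Set (Finset α) :=
  {S | S ⊆ C ∧ S.card = k ∧
    ∀ T ⊆ C, T.card = k → totalScore β γ C V k T ≤ totalScore β γ C V k S}

/-- Winning committees of the multi-stage `(β, γ)`-rule for stage vector `ks`:
the winning committee of each stage is the candidate pool of the next stage. -/
def msWinners {α : Type} (β : ScoreNorm) (γ : ℕ → ℕ → ℕ → ℝ) :
    List ℕ → Finset α → List (α → ℕ) → Set (Finset α)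
  | [], C, _ => {C}
  | k :: ks, C, V => {S | ∃ S₁ ∈ scoreWinners β γ C V k, S ∈ msWinners β γ ks S₁ V}

/-- Each `γ^{m,k}` is non-increasing on the positions `1, …, m`. -/
def GammaMono (γ : ℕ → ℕ → ℕ → ℝ) : Prop :=
  ∀ m k p q : ℕ, 1 ≤ p → p ≤ q → q ≤ m → γ m k q ≤ γ m k p

/-- Rationality of a `(β, γ)`-rule: for every pair `(m, k)` with `m > k ≥ 1`,
`γ^{m,k}(1) > γ^{m,k}(m)` when `β = ℓ₁`, and `γ^{m,k}(1) > γ^{m,k}(m-k+1)` when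
`β = ℓ_max`. -/
def RationalRule : ScoreNorm → (ℕ → ℕ → ℕ → ℝ) → Prop
  | .l1, γ => ∀ m k : ℕ, 1 ≤ k → k < m → γ m k m < γ m k 1
  | .lmax, γ => ∀ m k : ℕ, 1 ≤ k → k < m → γ m k (m - k + 1) < γ m k 1

/-- A valid stage vector for the candidate set `C`: `|C| > k_1 > … > k_t ≥ 1`. -/
def ValidVec {α : Type} (C : Finset α) (ks : List ℕ) : Prop :=
  List.Chain (· > ·) C.card ks ∧ ∀ k ∈ ks, 1 ≤ k

/-- Committee Monotonicity for the `t`-stage `(β, γ)`-rule: for every election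
(over any candidate type) and all `t`-dimensional stage vectors `ks₁`, `ks₂` with
`k¹_t + 1 = k²_t`, (i) every winning committee for `ks₁` extends to a winning
committee for `ks₂`, and (ii) every winning committee for `ks₂` contains a
winning committee for `ks₁`. -/
def MSCommitteeMonotone (β : ScoreNorm) (γ : ℕ → ℕ → ℕ → ℝ) (t : ℕ) : Prop :=
  ∀ (α : Type) (C : Finset α) (V : List (α → ℕ)), StrictPrefs C V →
    ∀ (ks₁ ks₂ : List ℕ) (h₁ : ks₁ ≠ []) (h₂ : ks₂ ≠ []),
      ks₁.length = t → ks₂.length = t → ValidVec C ks₁ → ValidVec C ks₂ →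
      ks₁.getLast h₁ + 1 = ks₂.getLast h₂ →
      (∀ S ∈ msWinners β γ ks₁ C V, ∃ S' ∈ msWinners β γ ks₂ C V, S ⊂ S') ∧
      (∀ S ∈ msWinners β γ ks₂ C V, ∃ S' ∈ msWinners β γ ks₁ C V, S' ⊂ S)

/-!
Take four real candidates `0, 1, 2, 3` and `t - 2` dummy candidates that every voter ranks last,
in the same order. The first `t - 2` stages of both stage vectors delete the dummies one at a
time (each real candidate is some voter's favourite, so deleting it costs strictly more). On the
four real candidates the stages `(2, 1)` can elect `{0}`, whereas `(3, 2)` elect `{0, 1, 2}` and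
then `{1, 2}` only, so `{0}` extends to no winner of the second vector.

Every score comparison is a first-order stochastic dominance. By Abel summation the total score
of a committee is a constant plus `∑ j, (γ(j) - γ(j + 1)) * h(j)`, where `h(j)` counts how often
the committee meets a voter's top `j` candidates (with multiplicity for `ℓ₁`). Dominance of these
hit counts therefore decides the comparison for every non-increasing `γ`, and strictly as soon as
it is strict below the position where rationality forces a drop of `γ`.
-/

open Finset

section Positions

variable {α : Type} {v : α → ℕ} {P : Finset α} {c e x : α}

lemma one_le_posIn (hc : c ∈ P) : 1 ≤ posIn v P c :=
  card_pos.2 ⟨c, mem_filter.2 ⟨hc, le_rfl⟩⟩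

lemma posIn_le_card : posIn v P c ≤ #P :=
  card_filter_le _ _

lemma posIn_eq_card (h : ∀ c ∈ P, v c ≤ v e) : posIn v P e = #P := by
  rw [posIn, filter_true_of_mem h]

lemma posIn_eq_one (hx : x ∈ P) (h : ∀ c ∈ P, c ≠ x → v x < v c) : posIn v P x = 1 := by
  rw [posIn, card_eq_one]
  refine ⟨x, eq_singleton_iff_unique_mem.2 ⟨mem_filter.2 ⟨hx, le_rfl⟩, fun c hc => ?_⟩⟩
  obtain ⟨hcP, hcx⟩ := mem_filter.1 hc
  by_contra hne
  exact (h c hcP hne).not_ge hcx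

lemma eq_of_posIn_le_one (hc : c ∈ P) (hx : x ∈ P) (hc1 : posIn v P c ≤ 1)
    (hx1 : posIn v P x = 1) : c = x := by
  rcases le_total (v c) (v x) with h | h
  · exact card_le_one.1 hx1.le c (mem_filter.2 ⟨hc, h⟩) x (mem_filter.2 ⟨hx, le_rfl⟩)
  · exact card_le_one.1 hc1 c (mem_filter.2 ⟨hc, le_rfl⟩) x (mem_filter.2 ⟨hx, h⟩)

end Positions

lemma sum_Ico_sub_succ {M : Type*} [AddCommGroup M] (f : ℕ → M) {a b : ℕ} (hab : a ≤ b) :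
    ∑ j ∈ Ico a b, (f j - f (j + 1)) = f a - f b := by
  rw [← neg_sub (f b), ← sum_Ico_sub f hab, ← sum_neg_distrib]
  simp only [neg_sub]

lemma eq_add_sum_Ico_mul_ite {R : Type*} [CommRing R] (f : ℕ → R) {p m : ℕ} (hp : 1 ≤ p)
    (hpm : p ≤ m) :
    f p = f m + ∑ j ∈ Ico 1 m, (f j - f (j + 1)) * if p ≤ j then 1 else 0 := by
  simp only [mul_ite, mul_one, mul_zero]
  rw [← sum_filter, show {j ∈ Ico 1 m | p ≤ j} = Ico p m by ext; simp; omega,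
    sum_Ico_sub_succ f hpm]
  ring

section Dominance

variable {α : Type} {β : ScoreNorm} {γ : ℕ → ℕ → ℕ → ℝ} {P S T : Finset α} {V : List (α → ℕ)}
  {v : α → ℕ} {k j : ℕ}

def topHits : ScoreNorm → (α → ℕ) → Finset α → Finset α → ℕ → ℕ
  | .l1, v, P, S, j => #{c ∈ S | posIn v P c ≤ j}
  | .lmax, v, P, S, j => if ∃ c ∈ S, posIn v P c ≤ j then 1 else 0

def totalHits (β : ScoreNorm) (P : Finset α) (V : List (α → ℕ)) (S : Finset α) (j : ℕ) : ℕ :=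
  (V.map fun v => topHits β v P S j).sum

def numScoreTerms : ScoreNorm → Finset α → ℕ
  | .l1, S => #S
  | .lmax, _ => 1

lemma topHits_mono (hTS : T ⊆ S) : topHits β v P T j ≤ topHits β v P S j := by
  cases β with
  | l1 => exact card_le_card (filter_subset_filter _ hTS)
  | lmax =>
    simp only [topHits]
    split_ifs with hT hS
    · exact le_rfl
    · obtain ⟨c, hc, hcj⟩ := hT
      exact absurd ⟨c, hTS hc, hcj⟩ hS
    all_goals omega

lemma totalHits_mono (hTS : T ⊆ S) : totalHits β P V T j ≤ totalHits β P V S j :=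
  List.sum_le_sum fun _ _ => topHits_mono hTS

lemma voterScore_eq_sum_topHits (hγ : GammaMono γ) (hS : S ⊆ P) (hne : S.Nonempty) :
    voterScore β γ P k v S = numScoreTerms β S * γ #P k #P +
      ∑ j ∈ Ico 1 #P, (γ #P k j - γ #P k (j + 1)) * topHits β v P S j := by
  cases β with
  | l1 =>
    simp only [voterScore, numScoreTerms, topHits, natCast_card_filter]
    rw [sum_congr rfl fun c hc => eq_add_sum_Ico_mul_ite (γ #P k) (one_le_posIn (hS hc))
      posIn_le_card, sum_add_distrib, sum_comm]
    simp only [sum_const, nsmul_eq_mul, mul_sum]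
  | lmax =>
    obtain ⟨c₀, hc₀, hmin⟩ := S.exists_min_image (posIn v P) hne
    have hsup : voterScore .lmax γ P k v S = γ #P k (posIn v P c₀) := by
      refine IsGreatest.csSup_eq ⟨⟨c₀, hc₀, rfl⟩, ?_⟩
      rintro _ ⟨c, hc, rfl⟩
      exact hγ _ _ _ _ (one_le_posIn (hS hc₀)) (hmin c hc) posIn_le_card
    have hhits : ∀ j, (∃ c ∈ S, posIn v P c ≤ j) ↔ posIn v P c₀ ≤ j :=
      fun j => ⟨fun ⟨c, hc, hcj⟩ => (hmin c hc).trans hcj, fun h => ⟨c₀, hc₀, h⟩⟩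
    simp only [hsup, numScoreTerms, topHits, hhits, Nat.cast_one, one_mul, Nat.cast_ite,
      Nat.cast_zero]
    exact eq_add_sum_Ico_mul_ite _ (one_le_posIn (hS hc₀)) posIn_le_card

lemma totalScore_eq_sum_totalHits (hγ : GammaMono γ) (hS : S ⊆ P) (hne : S.Nonempty) :
    totalScore β γ P V k S = V.length * numScoreTerms β S * γ #P k #P +
      ∑ j ∈ Ico 1 #P, (γ #P k j - γ #P k (j + 1)) * totalHits β P V S j := by
  induction V with
  | nil => simp [totalScore, totalHits]
  | cons w V ih =>
    simp only [totalScore, totalHits, List.map_cons, List.sum_cons, List.length_cons,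
      Nat.cast_add, Nat.cast_succ] at ih ⊢
    rw [voterScore_eq_sum_topHits hγ hS hne, ih]
    simp only [mul_add, sum_add_distrib]
    ring

lemma GammaMono.sub_succ_nonneg (hγ : GammaMono γ) {m : ℕ} (hj : j ∈ Ico 1 m) :
    0 ≤ γ m k j - γ m k (j + 1) := by
  rw [mem_Ico] at hj
  exact sub_nonneg.2 (hγ m k j (j + 1) hj.1 j.le_succ hj.2)

/-- The position up to which rationality guarantees a strict drop of `γ^{m,k}`. -/
def rationalBound : ScoreNorm → ℕ → ℕ → ℕ
  | .l1, m, _ => m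
  | .lmax, m, k => m - k + 1

lemma RationalRule.lt_rationalBound (hrat : RationalRule β γ) {m : ℕ} (hk : 1 ≤ k) (hkm : k < m) :
    γ m k (rationalBound β m k) < γ m k 1 := by
  cases β <;> exact hrat m k hk hkm

lemma rationalBound_mem_Icc {m : ℕ} (hk : 1 ≤ k) (hkm : k < m) :
    rationalBound β m k ∈ Icc 1 m := by
  cases β <;> simp only [rationalBound, mem_Icc] <;> omega

def Dominates (β : ScoreNorm) (P : Finset α) (V : List (α → ℕ)) (S T : Finset α) : Prop :=
  ∀ j ∈ Ico 1 #P, totalHits β P V T j ≤ totalHits β P V S j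

def StrictlyDominates (β : ScoreNorm) (P : Finset α) (V : List (α → ℕ)) (k : ℕ)
    (S T : Finset α) : Prop :=
  Dominates β P V S T ∧
    ∀ j ∈ Ico 1 (rationalBound β #P k), totalHits β P V T j < totalHits β P V S j

instance : Decidable (Dominates β P V S T) := by
  unfold Dominates; infer_instance

instance : Decidable (StrictlyDominates β P V k S T) := by
  unfold StrictlyDominates; infer_instance

lemma numScoreTerms_eq_of_card_eq (h : #S = #T) : numScoreTerms β S = numScoreTerms β T := by
  cases β <;> simp [numScoreTerms, h]

lemma totalScore_sub_totalScore (hγ : GammaMono γ) (hS : S ⊆ P) (hT : T ⊆ P) (hST : #S = #T)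
    (hTne : T.Nonempty) :
    totalScore β γ P V k S - totalScore β γ P V k T = ∑ j ∈ Ico 1 #P,
      (γ #P k j - γ #P k (j + 1)) * ((totalHits β P V S j : ℝ) - totalHits β P V T j) := by
  rw [totalScore_eq_sum_totalHits hγ hT hTne,
    totalScore_eq_sum_totalHits hγ hS (card_pos.1 (hST ▸ card_pos.2 hTne)),
    numScoreTerms_eq_of_card_eq hST]
  simp only [mul_sub, sum_sub_distrib]
  ring

theorem totalScore_le_of_dominates (hγ : GammaMono γ) (hS : S ⊆ P) (hT : T ⊆ P)
    (hST : #S = #T) (hTne : T.Nonempty) (h : Dominates β P V S T) :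
    totalScore β γ P V k T ≤ totalScore β γ P V k S := by
  refine sub_nonneg.1 (totalScore_sub_totalScore hγ hS hT hST hTne ▸ sum_nonneg fun j hj => ?_)
  exact mul_nonneg (hγ.sub_succ_nonneg hj) (sub_nonneg.2 (by exact_mod_cast h j hj))

theorem totalScore_lt_of_strictlyDominates (hγ : GammaMono γ) (hrat : RationalRule β γ)
    (hk : 1 ≤ k) (hkP : k < #P) (hS : S ⊆ P) (hT : T ⊆ P) (hST : #S = #T) (hTne : T.Nonempty)
    (h : StrictlyDominates β P V k S T) :
    totalScore β γ P V k T < totalScore β γ P V k S := by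
  obtain ⟨hle, hlt⟩ := h
  set M := rationalBound β #P k
  obtain ⟨hM1, hMP⟩ := mem_Icc.1 (rationalBound_mem_Icc (β := β) hk hkP)
  have hgap : 0 < ∑ j ∈ Ico 1 M, (γ #P k j - γ #P k (j + 1)) := by
    rw [sum_Ico_sub_succ _ hM1]
    exact sub_pos.2 (hrat.lt_rationalBound hk hkP)
  refine sub_pos.1 (totalScore_sub_totalScore hγ hS hT hST hTne ▸ hgap.trans_le ?_)
  calc
    _ ≤ ∑ j ∈ Ico 1 M, (γ #P k j - γ #P k (j + 1)) *
        ((totalHits β P V S j : ℝ) - totalHits β P V T j) := by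
      refine sum_le_sum fun j hj => le_mul_of_one_le_right ?_ ?_
      · exact hγ.sub_succ_nonneg (Ico_subset_Ico_right hMP hj)
      · rw [le_sub_iff_add_le']
        exact_mod_cast hlt j hj
    _ ≤ _ := by
      refine sum_le_sum_of_subset_of_nonneg (Ico_subset_Ico_right hMP) fun j hj _ => ?_
      exact mul_nonneg (hγ.sub_succ_nonneg hj) (sub_nonneg.2 (by exact_mod_cast hle j hj))

theorem mem_scoreWinners_of_forall_dominates (hγ : GammaMono γ) (hS : S ⊆ P) (hSk : #S = k)
    (hk : 1 ≤ k) (h : ∀ T ∈ P.powersetCard k, Dominates β P V S T) :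
    S ∈ scoreWinners β γ P V k :=
  ⟨hS, hSk, fun T hT hTk => totalScore_le_of_dominates hγ hS hT (hSk.trans hTk.symm)
    (card_pos.1 (by omega)) (h T (mem_powersetCard.2 ⟨hT, hTk⟩))⟩

theorem eq_of_mem_scoreWinners_of_forall_strictlyDominates (hγ : GammaMono γ)
    (hrat : RationalRule β γ) (hS : S ⊆ P) (hSk : #S = k) (hk : 1 ≤ k) (hkP : k < #P)
    (h : ∀ T ∈ P.powersetCard k, T ≠ S → StrictlyDominates β P V k S T)
    (hT : T ∈ scoreWinners β γ P V k) : T = S := by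
  obtain ⟨hTP, hTk, hmax⟩ := hT
  by_contra hne
  exact (hmax S hS hSk).not_gt <| totalScore_lt_of_strictlyDominates hγ hrat hk hkP hS hTP
    (hSk.trans hTk.symm) (card_pos.1 (by omega)) (h T (mem_powersetCard.2 ⟨hTP, hTk⟩) hne)

end Dominance

section LastCandidate

variable {α : Type} [DecidableEq α] {β : ScoreNorm} {γ : ℕ → ℕ → ℕ → ℝ} {P S T : Finset α}
  {V : List (α → ℕ)} {v w : α → ℕ} {e x : α} {k j : ℕ}

lemma topHits_erase_of_lt (hj : j < posIn v P e) :
    topHits β v P (P.erase e) j = topHits β v P P j := by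
  have hne : ∀ c, posIn v P c ≤ j → c ≠ e := fun c hc hce => by subst hce; omega
  cases β with
  | l1 =>
    simp only [topHits, filter_erase]
    exact congrArg card (erase_eq_of_notMem fun he => hne e (mem_filter.1 he).2 rfl)
  | lmax =>
    simp only [topHits]
    congr 1
    exact propext ⟨fun ⟨c, hc, hcj⟩ => ⟨c, mem_of_mem_erase hc, hcj⟩,
      fun ⟨c, hc, hcj⟩ => ⟨c, mem_erase.2 ⟨hne c hcj, hc⟩, hcj⟩⟩

lemma topHits_erase_lt (hx : x ∈ P) (hx1 : posIn v P x = 1) (hkP : k + 1 = #P)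
    (hj : j ∈ Ico 1 (rationalBound β #P k)) :
    topHits β v P (P.erase x) j < topHits β v P P j := by
  rw [mem_Ico] at hj
  cases β with
  | l1 =>
    simp only [topHits, filter_erase]
    exact card_erase_lt_of_mem (mem_filter.2 ⟨hx, by omega⟩)
  | lmax =>
    have hj1 : j = 1 := by simp only [rationalBound] at hj; omega
    have hmiss : ¬∃ c ∈ P.erase x, posIn v P c ≤ j := fun ⟨c, hc, hcj⟩ =>
      (mem_erase.1 hc).1 (eq_of_posIn_le_one (mem_of_mem_erase hc) hx (hj1 ▸ hcj) hx1)
    simp only [topHits, if_neg hmiss, if_pos (⟨x, hx, by omega⟩ : ∃ c ∈ P, posIn v P c ≤ j)]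
    exact one_pos

lemma dominates_erase_of_forall_posIn_eq_card (hlast : ∀ v ∈ V, posIn v P e = #P)
    (hT : T ⊆ P) : Dominates β P V (P.erase e) T := by
  intro j hj
  calc totalHits β P V T j ≤ totalHits β P V P j := totalHits_mono hT
    _ = totalHits β P V (P.erase e) j := by
      refine congrArg List.sum (List.map_congr_left fun v hv => ?_)
      rw [topHits_erase_of_lt (by rw [hlast v hv]; exact (mem_Ico.1 hj).2)]

theorem erase_mem_scoreWinners_of_forall_posIn_eq_card (hγ : GammaMono γ) (he : e ∈ P)
    (hlast : ∀ v ∈ V, posIn v P e = #P) (hk : 1 ≤ k) (hkP : k + 1 = #P) :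
    P.erase e ∈ scoreWinners β γ P V k := by
  have hcard : #(P.erase e) = k := by rw [card_erase_of_mem he]; omega
  refine ⟨erase_subset e P, hcard, fun T hT hTk => ?_⟩
  exact totalScore_le_of_dominates hγ (erase_subset e P) hT (hcard.trans hTk.symm)
    (card_pos.1 (by omega)) (dominates_erase_of_forall_posIn_eq_card hlast hT)

theorem erase_notMem_scoreWinners_of_posIn_eq_one (hγ : GammaMono γ) (hrat : RationalRule β γ)
    (he : e ∈ P) (hlast : ∀ v ∈ V, posIn v P e = #P) (hx : x ∈ P) (hw : w ∈ V)
    (hx1 : posIn w P x = 1) (hk : 1 ≤ k) (hkP : k + 1 = #P) :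
    P.erase x ∉ scoreWinners β γ P V k := by
  rintro ⟨-, -, hmax⟩
  have hcard : ∀ {y}, y ∈ P → #(P.erase y) = k := fun hy => by rw [card_erase_of_mem hy]; omega
  have hstrict : StrictlyDominates β P V k (P.erase e) (P.erase x) := by
    refine ⟨dominates_erase_of_forall_posIn_eq_card hlast (erase_subset x P), fun j hj => ?_⟩
    have hjP : j ∈ Ico 1 #P :=
      Ico_subset_Ico_right (mem_Icc.1 (rationalBound_mem_Icc (β := β) hk (by omega))).2 hj
    calc totalHits β P V (P.erase x) j < totalHits β P V P j :=
          List.sum_lt_sum _ _ (fun _ _ => topHits_mono (erase_subset x P))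
            ⟨w, hw, topHits_erase_lt hx hx1 hkP hj⟩
      _ ≤ totalHits β P V (P.erase e) j :=
          dominates_erase_of_forall_posIn_eq_card hlast subset_rfl j hjP
  exact (hmax _ (erase_subset e P) (hcard he)).not_gt <|
    totalScore_lt_of_strictlyDominates hγ hrat hk (by omega) (erase_subset e P)
      (erase_subset x P) ((hcard he).trans (hcard hx).symm) (card_pos.1 (by rw [hcard hx]; omega))
      hstrict

end LastCandidate

lemma msWinners_append {α : Type} (β : ScoreNorm) (γ : ℕ → ℕ → ℕ → ℝ) (ks ks' : List ℕ)
    (C : Finset α) (V : List (α → ℕ)) :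
    msWinners β γ (ks ++ ks') C V =
      {S | ∃ S₁ ∈ msWinners β γ ks C V, S ∈ msWinners β γ ks' S₁ V} := by
  induction ks generalizing C with
  | nil => simp [msWinners]
  | cons k ks ih =>
    ext S
    simp only [List.cons_append, msWinners, ih, Set.mem_ofPred_eq]
    grind

def prefixRanking (l : List ℕ) (c : ℕ) : ℕ :=
  if c ∈ l then l.idxOf c else l.length + c

lemma prefixRanking_injective (l : List ℕ) : Function.Injective (prefixRanking l) := by
  intro a b hab
  unfold prefixRanking at hab
  split_ifs at hab with ha hb hb
  · exact (List.idxOf_inj ha).1 hab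
  · exact absurd hab (by have := List.idxOf_lt_length_of_mem ha; omega)
  · exact absurd hab (by have := List.idxOf_lt_length_of_mem hb; omega)
  · omega

lemma prefixRanking_le {l : List ℕ} {c e : ℕ} (he : e ∉ l) (hce : c ≤ e) :
    prefixRanking l c ≤ prefixRanking l e := by
  unfold prefixRanking
  split_ifs with hc
  · have := List.idxOf_lt_length_of_mem hc; omega
  · omega

lemma prefixRanking_head_lt {a c : ℕ} {l : List ℕ} (hc : c ≠ a) :
    prefixRanking (a :: l) a < prefixRanking (a :: l) c := by
  simp only [prefixRanking, List.mem_cons_self, if_true, List.idxOf_cons_self]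
  split_ifs
  · rw [List.idxOf_cons_ne _ (Ne.symm hc)]; omega
  · simp

-- Found by a computer search for the dominances checked below. The candidates `4, 5, …` are
-- the dummies: `prefixRanking` puts them after `0, 1, 2, 3`, in increasing order.
def rankings : List (List ℕ) :=
  [[0, 1, 2, 3], [0, 3, 1, 2], [1, 0, 3, 2], [1, 2, 0, 3], [1, 2, 0, 3], [1, 3, 2, 0],
    [1, 3, 2, 0], [2, 0, 1, 3], [2, 0, 1, 3], [3, 2, 0, 1]]

def profile : List (ℕ → ℕ) :=
  rankings.map prefixRanking

lemma strictPrefs_profile (C : Finset ℕ) : StrictPrefs C profile := by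
  simp only [StrictPrefs, profile, List.forall_mem_map]
  exact fun l _ => (prefixRanking_injective l).injOn

lemma posIn_profile_max' {P : Finset ℕ} (hP : 4 < #P) (hne : P.Nonempty) :
    ∀ v ∈ profile, posIn v P (P.max' hne) = #P := by
  have hmax : 4 ≤ P.max' hne := by
    by_contra! h
    have := card_le_card fun c hc => mem_range.2 ((P.le_max' c hc).trans_lt h)
    rw [card_range] at this
    omega
  have hsmall : ∀ l ∈ rankings, ∀ c ∈ l, c < 4 := by decide
  simp only [profile, List.forall_mem_map]
  exact fun l hl => posIn_eq_card fun c hc =>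
    prefixRanking_le (fun h => by have := hsmall l hl _ h; omega) (P.le_max' c hc)

lemma exists_posIn_profile_eq_one {P : Finset ℕ} {r : ℕ} (hr : r < 4) (hrP : r ∈ P) :
    ∃ w ∈ profile, posIn w P r = 1 := by
  have htop : ∀ r < 4, ∃ l ∈ rankings, l.head? = some r := by decide
  obtain ⟨l, hl, hhead⟩ := htop r hr
  obtain ⟨l', rfl⟩ : ∃ l', l = r :: l' := List.head?_eq_some_iff.1 hhead
  exact ⟨_, List.mem_map_of_mem hl, posIn_eq_one hrP fun c _ hc => prefixRanking_head_lt hc⟩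

section Profile

variable {β : ScoreNorm} {γ : ℕ → ℕ → ℕ → ℝ}

lemma range_four_subset_of_mem_scoreWinners (hγ : GammaMono γ) (hrat : RationalRule β γ)
    {P S : Finset ℕ} {k : ℕ} (hP : range 4 ⊆ P) (hk : 4 ≤ k) (hkP : k + 1 = #P)
    (hS : S ∈ scoreWinners β γ P profile k) : range 4 ⊆ S := by
  intro r hr
  by_contra hrS
  have hrP := hP hr
  have hne : P.Nonempty := ⟨r, hrP⟩
  have hSr : S = P.erase r :=
    eq_of_subset_of_card_le (fun c hc => mem_erase.2 ⟨ne_of_mem_of_not_mem hc hrS, hS.1 hc⟩)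
      (by rw [card_erase_of_mem hrP, hS.2.1]; omega)
  obtain ⟨w, hw, hw1⟩ := exists_posIn_profile_eq_one (mem_range.1 hr) hrP
  exact erase_notMem_scoreWinners_of_posIn_eq_one hγ hrat (P.max'_mem hne)
    (posIn_profile_max' (by omega) hne) hrP hw hw1 (by omega) hkP (hSr ▸ hS)

def removalStages : ℕ → List ℕ
  | 0 => []
  | j + 1 => (j + 4) :: removalStages j

lemma length_removalStages (j : ℕ) : (removalStages j).length = j := by
  induction j with
  | zero => rfl
  | succ j ih => simp [removalStages, ih]

lemma four_le_of_mem_removalStages {j k : ℕ} (hk : k ∈ removalStages j) : 4 ≤ k := by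
  induction j with
  | zero => simp [removalStages] at hk
  | succ j ih =>
    rcases List.mem_cons.1 hk with rfl | hk
    · omega
    · exact ih hk

lemma validVec_removalStages_append (j : ℕ) {tail : List ℕ}
    (htail : List.IsChain (· > ·) (4 :: tail)) (hpos : ∀ k ∈ tail, 1 ≤ k) :
    ValidVec (range (j + 4)) (removalStages j ++ tail) := by
  have hchain : ∀ j, List.IsChain (· > ·) ((j + 4) :: (removalStages j ++ tail)) := by
    intro j
    induction j with
    | zero => exact htail
    | succ j ih => exact List.IsChain.cons_cons (by omega) ih
  refine ⟨by rw [card_range]; exact hchain j, fun k hk => ?_⟩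
  rcases List.mem_append.1 hk with hk | hk
  · have := four_le_of_mem_removalStages hk
    omega
  · exact hpos k hk

lemma msWinners_removalStages (hγ : GammaMono γ) (hrat : RationalRule β γ) (j : ℕ)
    {P : Finset ℕ} (hP : range 4 ⊆ P) (hcard : #P = j + 4) :
    msWinners β γ (removalStages j) P profile = {range 4} := by
  induction j generalizing P with
  | zero =>
    rw [removalStages, msWinners, eq_of_subset_of_card_le hP (by simp [hcard])]
  | succ j ih =>
    have hne : P.Nonempty := ⟨0, hP (by simp)⟩
    ext S
    simp only [removalStages, msWinners, Set.mem_ofPred_eq, Set.mem_singleton_iff]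
    constructor
    · rintro ⟨S₁, hS₁, hS⟩
      rwa [ih (range_four_subset_of_mem_scoreWinners hγ hrat hP (by omega) (by omega) hS₁)
        hS₁.2.1] at hS
    · rintro rfl
      have hwin := erase_mem_scoreWinners_of_forall_posIn_eq_card (β := β) hγ (P.max'_mem hne)
        (posIn_profile_max' (by omega) hne) (by omega) (by omega : j + 4 + 1 = #P)
      refine ⟨_, hwin, ?_⟩
      rw [ih (range_four_subset_of_mem_scoreWinners hγ hrat hP (by omega) (by omega) hwin)
        hwin.2.1]
      rfl

lemma singleton_zero_mem_msWinners (hγ : GammaMono γ) :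
    {0} ∈ msWinners β γ [2, 1] (range 4) profile :=
  ⟨{0, 1}, mem_scoreWinners_of_forall_dominates hγ (by decide) rfl (by norm_num)
      (by cases β <;> decide),
    {0}, mem_scoreWinners_of_forall_dominates hγ (by decide) rfl le_rfl (by cases β <;> decide),
    rfl⟩

lemma eq_of_mem_msWinners_three_two (hγ : GammaMono γ) (hrat : RationalRule β γ)
    {S : Finset ℕ} (hS : S ∈ msWinners β γ [3, 2] (range 4) profile) : S = {1, 2} := by
  obtain ⟨S₁, hS₁, S₂, hS₂, rfl⟩ := hS
  obtain rfl : S₁ = {0, 1, 2} := eq_of_mem_scoreWinners_of_forall_strictlyDominates hγ hrat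
    (by decide) rfl (by norm_num) (by decide) (by cases β <;> decide) hS₁
  exact eq_of_mem_scoreWinners_of_forall_strictlyDominates hγ hrat (by decide) rfl (by norm_num)
    (by decide) (by cases β <;> decide) hS₂

end Profile

/-- Committee Monotonicity does not preserve in a rational
multi-stage `(β, γ⃗)`-rule: for every `t ≥ 2`, every `β ∈ {ℓ₁, ℓ_max}` and every
rational non-increasing family `γ⃗`, the `t`-stage `(β, γ⃗)`-rule is not
committee monotone. -/
theorem multistage_score_rule_not_committee_monotone
    (t : ℕ) (ht : 2 ≤ t) (β : ScoreNorm) (γ : ℕ → ℕ → ℕ → ℝ)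
    (hγ : GammaMono γ) (hrat : RationalRule β γ) :
    ¬ MSCommitteeMonotone β γ t := by
  intro hmono
  obtain ⟨j, rfl⟩ : ∃ j, t = j + 2 := ⟨t - 2, by omega⟩
  obtain ⟨hextend, -⟩ := hmono ℕ (range (j + 4)) profile (strictPrefs_profile _)
    (removalStages j ++ [2, 1]) (removalStages j ++ [3, 2]) (by simp) (by simp)
    (by simp [length_removalStages]) (by simp [length_removalStages])
    (validVec_removalStages_append j (by decide) (by decide))
    (validVec_removalStages_append j (by decide) (by decide)) (by simp)
  have hcut := msWinners_removalStages hγ hrat j (range_subset_range.2 (by omega)) (card_range _)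
  obtain ⟨S, hS, hsub⟩ := hextend {0} <| by
    rw [msWinners_append, hcut]
    exact ⟨range 4, rfl, singleton_zero_mem_msWinners hγ⟩
  rw [msWinners_append, hcut] at hS
  obtain ⟨_, rfl, hS⟩ := hS
  rw [eq_of_mem_msWinners_three_two hγ hrat hS] at hsub
  exact absurd (hsub.subset (mem_singleton_self 0)) (by decide)
end

section
/- Let t ≥ 2, β ∈ {ℓ_1, ℓ_max}, and let 𝓡 be a rational t-stage (β, γ⃗)-rule. Then 𝓡 does not satisfy Candidate Monotonicity: there exist an election E = (C,V), a stage vector v⃗, a candidate c ∈ C with c ∈ S for some S ∈ 𝓡(E, v⃗), and a voter whose preference list, after shifting c one position forward to obtain election E', leaves c outside every committee in 𝓡(E', v⃗). -/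
/-- The preference list obtained from `v` by swapping the positions of `c` and
`d`; when `d` is the candidate ranked directly above `c`, this shifts `c` one
position forward. -/
def shiftForward {α : Type} [DecidableEq α] (v : α → ℕ) (c d : α) : α → ℕ :=
  fun x => if x = c then v d else if x = d then v c else v x

/-- Candidate Monotonicity for the `t`-stage `(β, γ)`-rule: whenever a candidate
`c` belongs to some winning committee and one voter shifts `c` one position
forward (swapping `c` with the candidate `d` ranked directly above `c`), `c`
still belongs to some winning committee. -/
def MSCandidateMonotone (β : ScoreNorm) (γ : ℕ → ℕ → ℕ → ℝ) (t : ℕ) : Prop :=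
  ∀ (α : Type) [DecidableEq α] (C : Finset α) (V : List (α → ℕ)), StrictPrefs C V →
    ∀ (ks : List ℕ), ks ≠ [] → ks.length = t → ValidVec C ks →
    ∀ c ∈ C, (∃ S ∈ msWinners β γ ks C V, c ∈ S) →
    ∀ (i : ℕ) (hi : i < V.length) (d : α), d ∈ C → d ≠ c →
      posIn (V.get ⟨i, hi⟩) C c = posIn (V.get ⟨i, hi⟩) C d + 1 →
      ∃ S' ∈ msWinners β γ ks C (V.set i (shiftForward (V.get ⟨i, hi⟩) c d)), c ∈ S'

/-!
Candidates `0, 1, 2` form a core and `3, …, t` are padding candidates, which every voter ranks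
below the core in one common order. Under the stage vector `[t, t - 1, …, 1]` every stage drops a
single candidate, and a stage dropping a single candidate drops one of least total loss
(`eliminationLoss`). Rationality makes dropping a core candidate that some voter ranks first
strictly worse than dropping the padding candidate everybody ranks last, so the first `t - 2`
stages remove the padding and the election is decided on the core by the stages `[2, 1]`.

On the core, nine voters rank every candidate in every position exactly three times, so `{0, 1}`
may survive the stage `2`, after which `0` beats `1` five to four. Let `ℓ` be the position losses
of the stage `2`; rationality gives `ℓ 3 < ℓ 1`. If `ℓ 2 < ℓ 1`, let the voter ranking
`1 ≻ 0 ≻ 2` move `0` up: then `1` alone has least loss, and in the final `2` beats `0` five to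
four. Otherwise `ℓ 3 < ℓ 2`, and the voter ranking `2 ≻ 1 ≻ 0` moving `0` up has the same effect.
-/

open Finset

section Positions

variable {α : Type} {v : α → ℕ} {C : Finset α} {x y : α}

lemma one_le_posIn_s5 (hx : x ∈ C) : 1 ≤ posIn v C x :=
  card_pos.mpr ⟨x, mem_filter.mpr ⟨hx, le_rfl⟩⟩

lemma posIn_le_card_s5 : posIn v C x ≤ C.card :=
  card_le_card (filter_subset _ _)

lemma posIn_lt_posIn (hy : y ∈ C) (hxy : v x < v y) : posIn v C x < posIn v C y := by
  refine card_lt_card ⟨fun z hz => ?_, fun h => ?_⟩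
  · rw [mem_filter] at hz ⊢
    exact ⟨hz.1, hz.2.trans hxy.le⟩
  · exact absurd (mem_filter.mp (h (mem_filter.mpr ⟨hy, le_rfl⟩))).2 (not_le.mpr hxy)

lemma posIn_injOn (hv : Set.InjOn v C) : Set.InjOn (posIn v C) C := by
  intro x hx y hy hxy
  by_contra hne
  rcases lt_or_gt_of_ne (hv.ne hx hy hne) with h | h
  · exact (posIn_lt_posIn hy h).ne hxy
  · exact (posIn_lt_posIn hx h).ne' hxy

lemma exists_posIn_eq (hv : Set.InjOn v C) {j : ℕ} (hj₁ : 1 ≤ j) (hj : j ≤ C.card) :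
    ∃ x ∈ C, posIn v C x = j := by
  have himage : C.image (posIn v C) = Icc 1 C.card :=
    eq_of_subset_of_card_le
      (fun p hp => by
        obtain ⟨x, hx, rfl⟩ := mem_image.mp hp
        exact mem_Icc.mpr ⟨one_le_posIn_s5 hx, posIn_le_card_s5⟩)
      (by rw [card_image_of_injOn (posIn_injOn hv), Nat.card_Icc, Nat.add_sub_cancel])
  simpa using himage.ge (mem_Icc.mpr ⟨hj₁, hj⟩)

lemma posIn_eq_card_s5 (hlast : ∀ y ∈ C, v y ≤ v x) : posIn v C x = C.card :=
  congrArg card (filter_true_of_mem hlast)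

lemma posIn_eq_posIn_of_subset {K : Finset α} (hKC : K ⊆ C)
    (hbelow : ∀ y ∈ C, y ∉ K → v x < v y) : posIn v C x = posIn v K x := by
  unfold posIn
  congr 1
  ext y
  simp only [mem_filter]
  refine ⟨fun ⟨hy, hyx⟩ => ⟨?_, hyx⟩, fun ⟨hy, hyx⟩ => ⟨hKC hy, hyx⟩⟩
  by_contra hyK
  exact absurd hyx (not_le.mpr (hbelow y hy hyK))

end Positions

/-- The score a voter loses when the candidate at position `p` of a pool of `m` candidates is
dropped from the pool: under `ℓ_max` only dropping the voter's favourite costs anything. -/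
def posLoss (β : ScoreNorm) (γ : ℕ → ℕ → ℕ → ℝ) (m k p : ℕ) : ℝ :=
  match β with
  | .l1 => γ m k p
  | .lmax => if p = 1 then γ m k 1 - γ m k 2 else 0

noncomputable def eliminationLoss {α : Type} (β : ScoreNorm) (γ : ℕ → ℕ → ℕ → ℝ)
    (P : Finset α) (V : List (α → ℕ)) (k : ℕ) (u : α) : ℝ :=
  (V.map fun v => posLoss β γ P.card k (posIn v P u)).sum

section Losses

variable {α : Type} {β : ScoreNorm} {γ : ℕ → ℕ → ℕ → ℝ} {m k p q : ℕ}

lemma posLoss_antitone (hγ : GammaMono γ) (hp : 1 ≤ p) (hpq : p ≤ q) (hq : q ≤ m) :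
    posLoss β γ m k q ≤ posLoss β γ m k p := by
  cases β with
  | l1 => exact hγ m k p q hp hpq hq
  | lmax =>
    simp only [posLoss]
    split_ifs with hq₁ hp₁
    · rfl
    · omega
    · exact sub_nonneg.mpr (hγ m k 1 2 le_rfl one_le_two (by omega))
    · rfl

lemma posLoss_last_lt_first (hrat : RationalRule β γ) (hk : 1 ≤ k) :
    posLoss β γ (k + 1) k (k + 1) < posLoss β γ (k + 1) k 1 := by
  cases β with
  | l1 => exact hrat (k + 1) k hk k.lt_succ_self
  | lmax =>
    have h := hrat (k + 1) k hk k.lt_succ_self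
    rw [show k + 1 - k + 1 = 2 by omega] at h
    simp only [posLoss, if_neg (show k + 1 ≠ 1 by omega), ↓reduceIte]
    linarith

lemma voterScore_lmax_eq {v : α → ℕ} {P S : Finset α} {x : α} (hγ : GammaMono γ)
    (hSP : S ⊆ P) (hx : x ∈ S) (hmin : ∀ y ∈ S, posIn v P x ≤ posIn v P y) :
    voterScore .lmax γ P k v S = γ P.card k (posIn v P x) := by
  refine le_antisymm (csSup_le ⟨_, x, hx, rfl⟩ ?_) ?_
  · rintro _ ⟨y, hy, rfl⟩
    exact hγ _ _ _ _ (one_le_posIn_s5 (hSP hx)) (hmin y hy) posIn_le_card_s5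
  · exact le_csSup ((S.finite_toSet.image _).bddAbove) ⟨x, hx, rfl⟩

variable [DecidableEq α]

lemma voterScore_erase_add_posLoss {v : α → ℕ} {P : Finset α} {u : α} (hγ : GammaMono γ)
    (hv : Set.InjOn v P) (hP : 2 ≤ P.card) (hu : u ∈ P) :
    voterScore β γ P k v (P.erase u) + posLoss β γ P.card k (posIn v P u) =
      voterScore β γ P k v P := by
  cases β with
  | l1 => exact sum_erase_add _ _ hu
  | lmax =>
    obtain ⟨x₁, hx₁, hpos₁⟩ := exists_posIn_eq hv le_rfl (show 1 ≤ P.card by omega)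
    have hfirst : voterScore .lmax γ P k v P = γ P.card k 1 :=
      hpos₁ ▸ voterScore_lmax_eq hγ subset_rfl hx₁ fun y hy => hpos₁ ▸ one_le_posIn_s5 hy
    rw [hfirst]
    by_cases hu₁ : posIn v P u = 1
    · obtain ⟨x₂, hx₂, hpos₂⟩ := exists_posIn_eq hv one_le_two hP
      have hx₂u : x₂ ≠ u := by rintro rfl; omega
      have hsecond : ∀ y ∈ P.erase u, 2 ≤ posIn v P y := by
        intro y hy
        obtain ⟨hyu, hyP⟩ := mem_erase.mp hy
        have h1 := one_le_posIn_s5 (v := v) hyP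
        have hne : posIn v P y ≠ posIn v P u := fun h => hyu (posIn_injOn hv hyP hu h)
        omega
      rw [voterScore_lmax_eq hγ (erase_subset u P) (mem_erase.mpr ⟨hx₂u, hx₂⟩)
        (fun y hy => hpos₂ ▸ hsecond y hy), hpos₂]
      simp [posLoss, hu₁]
    · have hx₁u : x₁ ≠ u := fun h => hu₁ (h ▸ hpos₁)
      rw [voterScore_lmax_eq hγ (erase_subset u P) (mem_erase.mpr ⟨hx₁u, hx₁⟩)
        (fun y hy => hpos₁ ▸ one_le_posIn_s5 (mem_of_mem_erase hy)), hpos₁]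
      simp [posLoss, hu₁]

lemma totalScore_erase_add_eliminationLoss {V : List (α → ℕ)} {P : Finset α} {u : α}
    (hγ : GammaMono γ) (hV : StrictPrefs P V) (hP : 2 ≤ P.card) (hu : u ∈ P) :
    totalScore β γ P V k (P.erase u) + eliminationLoss β γ P V k u = totalScore β γ P V k P := by
  rw [totalScore, eliminationLoss, ← List.sum_map_add, totalScore]
  exact congrArg List.sum (List.map_congr_left fun v hv =>
    voterScore_erase_add_posLoss hγ (hV v hv) hP hu)

end Losses

section Elimination

variable {α : Type} [DecidableEq α] {β : ScoreNorm} {γ : ℕ → ℕ → ℕ → ℝ}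
  {P S : Finset α} {V : List (α → ℕ)} {k : ℕ}

lemma exists_eq_erase_of_card_add_one {T : Finset α} (hT : T ⊆ P) (hcard : T.card + 1 = P.card) :
    ∃ u ∈ P, T = P.erase u := by
  obtain ⟨u, huT, rfl⟩ := exists_eq_insert_iff.mpr ⟨hT, hcard⟩
  exact ⟨u, mem_insert_self u T, (erase_insert huT).symm⟩

lemma mem_scoreWinners_iff_eq_erase (hγ : GammaMono γ) (hV : StrictPrefs P V)
    (hP : P.card = k + 1) (hk : 1 ≤ k) :
    S ∈ scoreWinners β γ P V k ↔ ∃ u ∈ P, S = P.erase u ∧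
      ∀ u' ∈ P, eliminationLoss β γ P V k u ≤ eliminationLoss β γ P V k u' := by
  have htotal := fun u (hu : u ∈ P) =>
    totalScore_erase_add_eliminationLoss (β := β) (k := k) hγ hV (by omega) hu
  constructor
  · rintro ⟨hSP, hS, hmax⟩
    obtain ⟨u, hu, rfl⟩ := exists_eq_erase_of_card_add_one hSP (by omega)
    refine ⟨u, hu, rfl, fun u' hu' => ?_⟩
    have := hmax (P.erase u') (erase_subset u' P) (by rw [card_erase_of_mem hu']; omega)
    linarith [htotal u hu, htotal u' hu']
  · rintro ⟨u, hu, rfl, hmin⟩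
    refine ⟨erase_subset u P, by rw [card_erase_of_mem hu]; omega, fun T hTP hT => ?_⟩
    obtain ⟨u', hu', rfl⟩ := exists_eq_erase_of_card_add_one hTP (by omega)
    linarith [htotal u hu, htotal u' hu', hmin u' hu']

lemma eq_erase_of_mem_scoreWinners {u₀ : α} (hγ : GammaMono γ) (hV : StrictPrefs P V)
    (hP : P.card = k + 1) (hk : 1 ≤ k) (hu₀ : u₀ ∈ P)
    (hmin : ∀ u ∈ P, u ≠ u₀ → eliminationLoss β γ P V k u₀ < eliminationLoss β γ P V k u)
    (hS : S ∈ scoreWinners β γ P V k) : S = P.erase u₀ := by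
  obtain ⟨u, hu, rfl, hu_min⟩ := (mem_scoreWinners_iff_eq_erase hγ hV hP hk).mp hS
  by_contra hne
  exact absurd (hu_min u₀ hu₀) (not_le.mpr (hmin u hu fun h => hne (h ▸ rfl)))

end Elimination

def countdown : ℕ → List ℕ
  | 0 => []
  | n + 1 => (n + 1) :: countdown n

lemma length_countdown (n : ℕ) : (countdown n).length = n := by
  induction n with
  | zero => rfl
  | succ n ih => simp [countdown, ih]

lemma validVec_countdown {α : Type} {C : Finset α} {n : ℕ} (hC : C.card = n + 1) :
    ValidVec C (countdown n) := by
  rw [ValidVec, hC]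
  clear hC
  induction n with
  | zero => exact ⟨List.IsChain.singleton _, by simp [countdown]⟩
  | succ n ih =>
    obtain ⟨hchain, hpos⟩ := ih
    exact ⟨List.IsChain.cons_cons (Nat.lt_succ_self _) hchain,
      by simpa [countdown] using hpos⟩

section Padding

variable {α : Type} [DecidableEq α] {β : ScoreNorm} {γ : ℕ → ℕ → ℕ → ℝ}
  {K P S : Finset α} {V : List (α → ℕ)} {g : α → ℕ} {k : ℕ}

lemma exists_ranked_last (hbelow : ∀ v ∈ V, ∀ x ∈ K, ∀ y ∉ K, v x < v y)
    (hcommon : ∀ v ∈ V, ∀ y ∉ K, v y = g y) (hKP : K ⊂ P) :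
    ∃ w ∈ P, w ∉ K ∧ ∀ v ∈ V, posIn v P w = P.card := by
  obtain ⟨w, hw, hmax⟩ := exists_max_image (P \ K) g (sdiff_nonempty.mpr hKP.2)
  obtain ⟨hwP, hwK⟩ := mem_sdiff.mp hw
  refine ⟨w, hwP, hwK, fun v hv => posIn_eq_card_s5 fun y hy => ?_⟩
  by_cases hyK : y ∈ K
  · exact (hbelow v hv y hyK w hwK).le
  · rw [hcommon v hv y hyK, hcommon v hv w hwK]
    exact hmax y (mem_sdiff.mpr ⟨hy, hyK⟩)

variable (hγ : GammaMono γ) (hbelow : ∀ v ∈ V, ∀ x ∈ K, ∀ y ∉ K, v x < v y)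
  (hcommon : ∀ v ∈ V, ∀ y ∉ K, v y = g y)
include hγ hbelow hcommon

lemma exists_superset_mem_scoreWinners (hV : StrictPrefs P V) (hKP : K ⊂ P)
    (hP : P.card = k + 1) (hk : 1 ≤ k) : ∃ S ∈ scoreWinners β γ P V k, K ⊆ S := by
  obtain ⟨w, hwP, hwK, hlast⟩ := exists_ranked_last hbelow hcommon hKP
  refine ⟨P.erase w, ?_, fun x hx => mem_erase.mpr ⟨ne_of_mem_of_not_mem hx hwK, hKP.1 hx⟩⟩
  refine (mem_scoreWinners_iff_eq_erase hγ hV hP hk).mpr ⟨w, hwP, rfl, fun u hu => ?_⟩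
  refine List.sum_le_sum fun v hv => ?_
  rw [hlast v hv]
  exact posLoss_antitone hγ (one_le_posIn_s5 hu) posIn_le_card_s5 le_rfl

lemma subset_of_mem_scoreWinners (hrat : RationalRule β γ)
    (hfav : ∀ u ∈ K, ∃ v ∈ V, posIn v K u = 1) (hV : StrictPrefs P V) (hKP : K ⊂ P)
    (hP : P.card = k + 1) (hk : 1 ≤ k) (hS : S ∈ scoreWinners β γ P V k) : K ⊆ S := by
  obtain ⟨u, hu, rfl, hmin⟩ := (mem_scoreWinners_iff_eq_erase hγ hV hP hk).mp hS
  obtain ⟨w, hwP, hwK, hlast⟩ := exists_ranked_last hbelow hcommon hKP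
  intro x hx
  refine mem_erase.mpr ⟨?_, hKP.1 hx⟩
  rintro rfl
  obtain ⟨v₀, hv₀, hfirst⟩ := hfav x hx
  have hfirst' : posIn v₀ P x = 1 := by
    rw [posIn_eq_posIn_of_subset hKP.1 fun y _ hy => hbelow v₀ hv₀ x hx y hy, hfirst]
  have hlt : eliminationLoss β γ P V k w < eliminationLoss β γ P V k x := by
    refine List.sum_lt_sum _ _ (fun v hv => ?_) ⟨v₀, hv₀, ?_⟩
    · rw [hlast v hv]
      exact posLoss_antitone hγ (one_le_posIn_s5 hu) posIn_le_card_s5 le_rfl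
    · rw [hlast v₀ hv₀, hfirst', hP]
      exact posLoss_last_lt_first hrat hk
  exact absurd (hmin w hwP) (not_le.mpr hlt)

/-- The padding candidates `P \ K` are eliminated one per stage. -/
lemma msWinners_countdown_eq (hrat : RationalRule β γ)
    (hfav : ∀ u ∈ K, ∃ v ∈ V, posIn v K u = 1) (hK : K.card = k + 1) (n : ℕ)
    (hKP : K ⊆ P) (hP : P.card = n + k + 1) (hV : StrictPrefs P V) :
    msWinners β γ (countdown (n + k)) P V = msWinners β γ (countdown k) K V := by
  induction n generalizing P with
  | zero => rw [zero_add, eq_of_subset_of_card_le hKP (by omega)]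
  | succ n ih =>
    have hKP' : K ⊂ P := Finset.ssubset_iff_subset_ne.mpr ⟨hKP, by rintro rfl; omega⟩
    have hP' : P.card = n + k + 1 + 1 := by omega
    ext S
    rw [Nat.add_right_comm n 1 k]
    simp only [countdown, msWinners, Set.mem_ofPred_eq]
    constructor
    · rintro ⟨S₁, hS₁, hS⟩
      rwa [← ih (subset_of_mem_scoreWinners hγ hbelow hcommon hrat hfav hV hKP' hP' (by omega) hS₁)
        hS₁.2.1 (fun v hv => (hV v hv).mono (coe_subset.mpr hS₁.1))]
    · intro hS
      obtain ⟨S₁, hS₁, hKS₁⟩ :=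
        exists_superset_mem_scoreWinners hγ hbelow hcommon hV hKP' hP' (by omega)
      exact ⟨S₁, hS₁, by
        rwa [ih hKS₁ hS₁.2.1 (fun v hv => (hV v hv).mono (coe_subset.mpr hS₁.1))]⟩

end Padding

namespace Counterexample

/-- Candidates are natural numbers: `0, 1, 2` form the core and `3, …, t` pad the election. -/
def core : Finset ℕ := {0, 1, 2}

/-- `ballot a b c` ranks the core candidates `0, 1, 2` at positions `a, b, c` and each padding
candidate `x ≥ 3` below them, at position `x + 1`. -/
def ballot (a b c : ℕ) (x : ℕ) : ℕ :=
  if x = 0 then a else if x = 1 then b else if x = 2 then c else x + 1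

def IsBallot (v : ℕ → ℕ) : Prop :=
  Function.Injective v ∧ (∀ x ∈ core, v x ≤ 3) ∧ ∀ y ∉ core, v y = y + 1

lemma isBallot_ballot {a b c : ℕ} (h : [a, b, c].Perm [1, 2, 3]) : IsBallot (ballot a b c) := by
  have hnd : [a, b, c].Nodup := h.nodup_iff.mpr (by decide)
  have hle : ∀ z ∈ [a, b, c], z ≤ 3 := fun z hz => by
    have := h.subset hz
    simp only [List.mem_cons, List.not_mem_nil, or_false] at this
    omega
  simp only [List.nodup_cons, List.mem_cons, List.not_mem_nil, or_false, not_or] at hnd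
  simp only [List.mem_cons, List.not_mem_nil, or_false, forall_eq_or_imp, forall_eq] at hle
  refine ⟨fun x y hxy => ?_, fun x hx => ?_, fun y hy => ?_⟩
  · unfold ballot at hxy
    split_ifs at hxy <;> omega
  · simp only [core, mem_insert, mem_singleton] at hx
    rcases hx with rfl | rfl | rfl <;> simp [ballot, hle]
  · simp only [core, mem_insert, mem_singleton, not_or] at hy
    simp [ballot, hy]

lemma IsBallot.lt_of_mem_core {v : ℕ → ℕ} (hv : IsBallot v) {x y : ℕ} (hx : x ∈ core)
    (hy : y ∉ core) : v x < v y := by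
  have hy3 : 3 ≤ y := by
    simp only [core, mem_insert, mem_singleton, not_or] at hy
    omega
  have := hv.2.1 x hx
  rw [hv.2.2 y hy]
  omega

lemma posIn_range_eq_posIn_core {v : ℕ → ℕ} (hv : IsBallot v) {x : ℕ} (hx : x ∈ core) (n : ℕ) :
    posIn v (range (n + 3)) x = posIn v core x :=
  posIn_eq_posIn_of_subset (by intro y; simp [core]; omega)
    fun _ _ hy => hv.lt_of_mem_core hx hy

lemma shiftForward_ballot (a b c : ℕ) : shiftForward (ballot a b c) 0 1 = ballot b a c := by
  funext x
  by_cases h0 : x = 0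
  · simp [shiftForward, ballot, h0]
  · by_cases h1 : x = 1 <;> simp [shiftForward, ballot, h0, h1]

/-- Nine voters; the first two are the ones that shift candidate `0` in the two scenarios. -/
def profile (v₀ v₁ : ℕ → ℕ) : List (ℕ → ℕ) :=
  [v₀, v₁, ballot 1 2 3, ballot 1 2 3, ballot 1 3 2, ballot 3 1 2, ballot 3 1 2,
    ballot 2 3 1, ballot 2 3 1]

section Profile

variable {v₀ v₁ : ℕ → ℕ} (h₀ : IsBallot v₀) (h₁ : IsBallot v₁)
include h₀ h₁

lemma isBallot_of_mem_profile : ∀ v ∈ profile v₀ v₁, IsBallot v := by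
  simp only [profile, List.mem_cons, List.not_mem_nil, or_false]
  rintro v (rfl | rfl | rfl | rfl | rfl | rfl | rfl | rfl | rfl)
  all_goals first | assumption | exact isBallot_ballot (by decide)

lemma strictPrefs_profile (C : Finset ℕ) : StrictPrefs C (profile v₀ v₁) :=
  fun v hv => (isBallot_of_mem_profile h₀ h₁ v hv).1.injOn

lemma msWinners_profile {β : ScoreNorm} {γ : ℕ → ℕ → ℕ → ℝ} (hγ : GammaMono γ)
    (hrat : RationalRule β γ) (n : ℕ) :
    msWinners β γ (countdown (n + 2)) (range (n + 3)) (profile v₀ v₁) =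
      msWinners β γ (countdown 2) core (profile v₀ v₁) := by
  have hballots := isBallot_of_mem_profile h₀ h₁
  refine msWinners_countdown_eq (g := (· + 1)) hγ
    (fun v hv x hx y hy => (hballots v hv).lt_of_mem_core hx hy)
    (fun v hv y hy => (hballots v hv).2.2 y hy) hrat ?_ rfl n
    (by intro y; simp [core]; omega) (card_range _) (strictPrefs_profile h₀ h₁ _)
  intro u hu
  simp only [core, mem_insert, mem_singleton] at hu
  rcases hu with rfl | rfl | rfl
  · exact ⟨ballot 1 2 3, by simp [profile], by decide⟩
  · exact ⟨ballot 3 1 2, by simp [profile], by decide⟩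
  · exact ⟨ballot 2 3 1, by simp [profile], by decide⟩

end Profile

section Core

variable {β : ScoreNorm} {γ : ℕ → ℕ → ℕ → ℝ} {V : List (ℕ → ℕ)}

lemma zero_mem_msWinners_core (hγ : GammaMono γ) (hV : StrictPrefs core V)
    (h₂₀ : eliminationLoss β γ core V 2 2 ≤ eliminationLoss β γ core V 2 0)
    (h₂₁ : eliminationLoss β γ core V 2 2 ≤ eliminationLoss β γ core V 2 1)
    (h₁₀ : eliminationLoss β γ {0, 1} V 1 1 ≤ eliminationLoss β γ {0, 1} V 1 0) :
    {0} ∈ msWinners β γ (countdown 2) core V := by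
  refine ⟨{0, 1}, (mem_scoreWinners_iff_eq_erase hγ hV rfl one_le_two).mpr
    ⟨2, by decide, by decide, ?_⟩, {0}, (mem_scoreWinners_iff_eq_erase hγ ?_ rfl le_rfl).mpr
    ⟨1, by decide, by decide, ?_⟩, rfl⟩
  · simp only [core, mem_insert, mem_singleton]
    rintro u (rfl | rfl | rfl) <;> first | assumption | exact le_rfl
  · exact fun v hv => (hV v hv).mono (by simp [core])
  · simp only [mem_insert, mem_singleton]
    rintro u (rfl | rfl) <;> first | assumption | exact le_rfl

lemma zero_notMem_msWinners_core (hγ : GammaMono γ) (hV : StrictPrefs core V)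
    (h₁₀ : eliminationLoss β γ core V 2 1 < eliminationLoss β γ core V 2 0)
    (h₁₂ : eliminationLoss β γ core V 2 1 < eliminationLoss β γ core V 2 2)
    (h₀₂ : eliminationLoss β γ {0, 2} V 1 0 < eliminationLoss β γ {0, 2} V 1 2) :
    ∀ S ∈ msWinners β γ (countdown 2) core V, 0 ∉ S := by
  rintro S ⟨S₁, hS₁, S₂, hS₂, rfl⟩
  have hS₁ : S₁ = {0, 2} := by
    rw [eq_erase_of_mem_scoreWinners (u₀ := 1) (k := 2) hγ hV rfl one_le_two (by decide) ?_ hS₁]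
    · rfl
    · simp only [core, mem_insert, mem_singleton]
      rintro u (rfl | rfl | rfl) hu <;> first | assumption | exact absurd rfl hu
  subst hS₁
  rw [eq_erase_of_mem_scoreWinners (u₀ := 0) (k := 1) hγ
    (fun v hv => (hV v hv).mono (by simp [core])) rfl le_rfl (by decide) ?_ hS₂]
  · simp
  · simp only [mem_insert, mem_singleton]
    rintro u (rfl | rfl) hu <;> first | assumption | exact absurd rfl hu

end Core

section Scenarios

variable {β : ScoreNorm} {γ : ℕ → ℕ → ℕ → ℝ} (hγ : GammaMono γ) (hrat : RationalRule β γ)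
include hγ hrat

lemma exists_zero_mem_msWinners_base (n : ℕ) :
    ∃ S ∈ msWinners β γ (countdown (n + 2)) (range (n + 3))
      (profile (ballot 2 1 3) (ballot 3 2 1)), 0 ∈ S := by
  refine ⟨{0}, ?_, mem_singleton_self 0⟩
  rw [msWinners_profile (isBallot_ballot (by decide)) (isBallot_ballot (by decide)) hγ hrat]
  have hℓ' := posLoss_antitone (β := β) (m := 2) (k := 1) hγ le_rfl one_le_two le_rfl
  refine zero_mem_msWinners_core hγ
    (strictPrefs_profile (isBallot_ballot (by decide)) (isBallot_ballot (by decide)) _) ?_ ?_ ?_ <;>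
    simp [eliminationLoss, profile, posIn, ballot, core, filter_insert, filter_singleton] <;>
    linarith

lemma zero_notMem_msWinners_first_shift (hℓ : posLoss β γ 3 2 2 < posLoss β γ 3 2 1) (n : ℕ) :
    ∀ S ∈ msWinners β γ (countdown (n + 2)) (range (n + 3))
      (profile (shiftForward (ballot 2 1 3) 0 1) (ballot 3 2 1)), 0 ∉ S := by
  have hℓ' : posLoss β γ 2 1 2 < posLoss β γ 2 1 1 := posLoss_last_lt_first hrat le_rfl
  rw [shiftForward_ballot,
    msWinners_profile (isBallot_ballot (by decide)) (isBallot_ballot (by decide)) hγ hrat]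
  refine zero_notMem_msWinners_core hγ
    (strictPrefs_profile (isBallot_ballot (by decide)) (isBallot_ballot (by decide)) _) ?_ ?_ ?_ <;>
    simp [eliminationLoss, profile, posIn, ballot, core, filter_insert, filter_singleton] <;>
    linarith

lemma zero_notMem_msWinners_second_shift (hℓ : posLoss β γ 3 2 3 < posLoss β γ 3 2 2) (n : ℕ) :
    ∀ S ∈ msWinners β γ (countdown (n + 2)) (range (n + 3))
      (profile (ballot 2 1 3) (shiftForward (ballot 3 2 1) 0 1)), 0 ∉ S := by
  have hℓ' : posLoss β γ 2 1 2 < posLoss β γ 2 1 1 := posLoss_last_lt_first hrat le_rfl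
  rw [shiftForward_ballot,
    msWinners_profile (isBallot_ballot (by decide)) (isBallot_ballot (by decide)) hγ hrat]
  refine zero_notMem_msWinners_core hγ
    (strictPrefs_profile (isBallot_ballot (by decide)) (isBallot_ballot (by decide)) _) ?_ ?_ ?_ <;>
    simp [eliminationLoss, profile, posIn, ballot, core, filter_insert, filter_singleton] <;>
    linarith

end Scenarios

end Counterexample

open Counterexample in
/-- Candidate Monotonicity does not preserve in a rational
multi-stage `(β, γ⃗)`-rule: for every `t ≥ 2`, every `β ∈ {ℓ₁, ℓ_max}` and every
rational non-increasing family `γ⃗`, the `t`-stage `(β, γ⃗)`-rule is not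
candidate monotone. -/
theorem multistage_score_rule_not_candidate_monotone
    (t : ℕ) (ht : 2 ≤ t) (β : ScoreNorm) (γ : ℕ → ℕ → ℕ → ℝ)
    (hγ : GammaMono γ) (hrat : RationalRule β γ) :
    ¬ MSCandidateMonotone β γ t := by
  obtain ⟨n, rfl⟩ : ∃ n, t = n + 2 := ⟨t - 2, by omega⟩
  intro hmono
  have h213 : IsBallot (ballot 2 1 3) := isBallot_ballot (by decide)
  have h321 : IsBallot (ballot 3 2 1) := isBallot_ballot (by decide)
  have hshift := hmono ℕ (range (n + 3)) _ (strictPrefs_profile h213 h321 _) (countdown (n + 2))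
    (by simp [countdown]) (length_countdown _) (validVec_countdown (card_range _)) 0 (by simp)
    (exists_zero_mem_msWinners_base hγ hrat n)
  by_cases hℓ : posLoss β γ 3 2 2 < posLoss β γ 3 2 1
  · obtain ⟨S, hS, h0S⟩ := hshift 0 (show 0 < 9 by norm_num) 1 (by simp) one_ne_zero <| by
      show posIn (ballot 2 1 3) _ 0 = posIn (ballot 2 1 3) _ 1 + 1
      rw [posIn_range_eq_posIn_core h213 (by decide : 0 ∈ core),
        posIn_range_eq_posIn_core h213 (by decide : 1 ∈ core)]
      decide
    exact zero_notMem_msWinners_first_shift hγ hrat hℓ n S hS h0S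
  · obtain ⟨S, hS, h0S⟩ := hshift 1 (show 1 < 9 by norm_num) 1 (by simp) one_ne_zero <| by
      show posIn (ballot 3 2 1) _ 0 = posIn (ballot 3 2 1) _ 1 + 1
      rw [posIn_range_eq_posIn_core h321 (by decide : 0 ∈ core),
        posIn_range_eq_posIn_core h321 (by decide : 1 ∈ core)]
      decide
    have hℓ₃ : posLoss β γ 3 2 3 < posLoss β γ 3 2 1 := posLoss_last_lt_first hrat one_le_two
    exact zero_notMem_msWinners_second_shift hγ hrat (by linarith) n S hS h0S
end

section
/- For every t ≥ 2, the t-stage (ℓ_max, Borda)-rule (the Chamberlin–Courant rule, with position scores Borda^{m,k}(p) = m − p and committee score f_v(S) = max_{c∈S}(m − p_v(c)), applied at every stage) does not satisfy Consistency. -/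
/-- Consistency for the `t`-stage `(β, γ)`-rule: whenever two voter lists over
the same candidate set have a common winning committee, the winning committees
of the combined electorate are exactly the common winning committees. -/
def MSConsistent (β : ScoreNorm) (γ : ℕ → ℕ → ℕ → ℝ) (t : ℕ) : Prop :=
  ∀ (α : Type) (C : Finset α) (V₁ V₂ : List (α → ℕ)),
    StrictPrefs C V₁ → StrictPrefs C V₂ →
    ∀ (ks : List ℕ), ks ≠ [] → ks.length = t → ValidVec C ks →
    (msWinners β γ ks C V₁ ∩ msWinners β γ ks C V₂).Nonempty →
    msWinners β γ ks C (V₁ ++ V₂) = msWinners β γ ks C V₁ ∩ msWinners β γ ks C V₂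

/-! Candidates are natural numbers and every voter ranks `0, 1, 2` (in some order) above all
other candidates. On the pool `{0, …, t}` with stages `(t, t - 1, …, 1)`, as long as each of
`0, 1, 2` is some voter's favourite, a committee containing all three gives every voter the
maximal score while dropping a favourite costs its voters, so the first `t - 2` stages can only
shrink the pool to `{0, 1, 2}`. There `profile₁` and `profile₂` both elect `{0}` (through `{0, 1}`
and `{0, 2}` respectively, each time after a tie), but in their union `1` and `2` are the
favourites of three voters each against two for `0`, so `{1, 2}` is the unique winner of the
first of the two remaining stages and `{0}` is lost. -/

namespace MultistageCC

def borda : ℕ → ℕ → ℕ → ℝ := fun m _ p => (m : ℝ) - (p : ℝ)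

def IsTopChoice {α : Type} (v : α → ℕ) (P : Finset α) (r : α) : Prop :=
  ∀ c ∈ P, c ≠ r → v r < v c

section Scores

variable {α : Type} {v : α → ℕ} {P Q S : Finset α} {r c : α} {k j : ℕ}

theorem IsTopChoice.mono (h : IsTopChoice v P r) (hQP : Q ⊆ P) : IsTopChoice v Q r :=
  fun c hc => h c (hQP hc)

theorem one_le_posIn (hc : c ∈ P) : 1 ≤ posIn v P c :=
  Finset.card_pos.2 ⟨c, Finset.mem_filter.2 ⟨hc, le_rfl⟩⟩

theorem posIn_eq_one (hr : r ∈ P) (htop : IsTopChoice v P r) : posIn v P r = 1 := by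
  refine Finset.card_eq_one.2 ⟨r, Finset.ext fun c => ?_⟩
  simp only [Finset.mem_filter, Finset.mem_singleton]
  refine ⟨fun ⟨hc, hle⟩ => ?_, by rintro rfl; exact ⟨hr, le_rfl⟩⟩
  by_contra hcr
  exact (htop c hc hcr).not_ge hle

theorem two_le_posIn (hr : r ∈ P) (hc : c ∈ P) (htop : IsTopChoice v P r) (hcr : c ≠ r) :
    2 ≤ posIn v P c :=
  Finset.one_lt_card.2 ⟨r, Finset.mem_filter.2 ⟨hr, (htop c hc hcr).le⟩,
    c, Finset.mem_filter.2 ⟨hc, le_rfl⟩, hcr.symm⟩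

theorem voterScore_lmax_eq_sup' (γ : ℕ → ℕ → ℕ → ℝ) (hS : S.Nonempty) :
    voterScore .lmax γ P k v S = S.sup' hS fun c => γ P.card k (posIn v P c) := by
  rw [voterScore, Finset.sup'_eq_csSup_image]

theorem voterScore_borda_le_of_forall_le (hS : S.Nonempty) (h : ∀ c ∈ S, j ≤ posIn v P c) :
    voterScore .lmax borda P k v S ≤ P.card - j := by
  rw [voterScore_lmax_eq_sup' _ hS]
  refine Finset.sup'_le _ _ fun c hc => ?_
  have : (j : ℝ) ≤ posIn v P c := by exact_mod_cast h c hc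
  simp only [borda]
  linarith

theorem voterScore_borda_le (hS : S.Nonempty) (hSP : S ⊆ P) :
    voterScore .lmax borda P k v S ≤ P.card - 1 := by
  exact_mod_cast voterScore_borda_le_of_forall_le hS fun c hc => one_le_posIn (hSP hc)

theorem voterScore_borda_eq_of_isTopChoice_mem (hSP : S ⊆ P) (hrS : r ∈ S)
    (htop : IsTopChoice v P r) : voterScore .lmax borda P k v S = P.card - 1 := by
  refine (voterScore_borda_le ⟨r, hrS⟩ hSP).antisymm ?_
  rw [voterScore_lmax_eq_sup' _ ⟨r, hrS⟩]
  refine le_of_eq_of_le ?_ (Finset.le_sup' _ hrS)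
  simp [borda, posIn_eq_one (hSP hrS) htop]

theorem voterScore_borda_le_of_isTopChoice_notMem (hS : S.Nonempty) (hSP : S ⊆ P)
    (hr : r ∈ P) (htop : IsTopChoice v P r) (hrS : r ∉ S) :
    voterScore .lmax borda P k v S ≤ P.card - 2 := by
  exact_mod_cast voterScore_borda_le_of_forall_le hS fun c hc =>
    two_le_posIn hr (hSP hc) htop (ne_of_mem_of_not_mem hc hrS)

variable {V : List (α → ℕ)}

theorem totalScore_borda_le (hS : S.Nonempty) (hSP : S ⊆ P) :
    totalScore .lmax borda P V k S ≤ V.length * ((P.card : ℝ) - 1) := by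
  have := List.sum_le_sum (l := V) (f := fun w => voterScore .lmax borda P k w S)
    (g := fun _ => (P.card : ℝ) - 1) fun w _ => voterScore_borda_le hS hSP
  rwa [List.map_const', List.sum_replicate, nsmul_eq_mul] at this

theorem totalScore_borda_eq_of_forall_isTopChoice (hSP : S ⊆ P)
    (h : ∀ w ∈ V, ∃ r ∈ S, IsTopChoice w P r) :
    totalScore .lmax borda P V k S = V.length * ((P.card : ℝ) - 1) := by
  rw [totalScore, List.map_congr_left (g := fun _ => (P.card : ℝ) - 1) fun w hw => ?_,
    List.map_const', List.sum_replicate, nsmul_eq_mul]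
  obtain ⟨r, hrS, htop⟩ := h w hw
  exact voterScore_borda_eq_of_isTopChoice_mem hSP hrS htop

theorem totalScore_borda_lt_of_isTopChoice_notMem (hS : S.Nonempty) (hSP : S ⊆ P)
    (hv : v ∈ V) (hr : r ∈ P) (htop : IsTopChoice v P r) (hrS : r ∉ S) :
    totalScore .lmax borda P V k S < V.length * ((P.card : ℝ) - 1) := by
  have := List.sum_lt_sum _ (fun _ => (P.card : ℝ) - 1)
    (fun w _ => voterScore_borda_le (v := w) (k := k) hS hSP)
    ⟨v, hv, (voterScore_borda_le_of_isTopChoice_notMem hS hSP hr htop hrS).trans_lt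
      (by linarith)⟩
  rwa [List.map_const', List.sum_replicate, nsmul_eq_mul] at this

end Scores

section Winners

variable {α : Type} {P R : Finset α} {V : List (α → ℕ)} {k : ℕ}

theorem scoreWinners_borda_eq (hRP : R ⊆ P) (hV : ∀ v ∈ V, ∃ r ∈ R, IsTopChoice v P r)
    (hR : ∀ r ∈ R, ∃ v ∈ V, IsTopChoice v P r) (hk : R.card ≤ k) :
    scoreWinners .lmax borda P V k = {S | R ⊆ S ∧ S ⊆ P ∧ S.card = k} := by
  have hV' : ∀ S, R ⊆ S → ∀ v ∈ V, ∃ r ∈ S, IsTopChoice v P r := fun S hRS v hv =>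
    (hV v hv).imp fun r ⟨hr, htop⟩ => ⟨hRS hr, htop⟩
  ext S
  constructor
  · rintro ⟨hSP, hSk, hmax⟩
    refine ⟨fun r hr => ?_, hSP, hSk⟩
    by_contra hrS
    obtain ⟨v, hv, htop⟩ := hR r hr
    obtain ⟨T, hRT, hTP, hTk⟩ :=
      Finset.exists_subsuperset_card_eq hRP hk (hSk ▸ Finset.card_le_card hSP)
    have hSne : S.Nonempty :=
      Finset.card_pos.1 (hSk ▸ hk.trans_lt' (Finset.card_pos.2 ⟨r, hr⟩))
    have hT := totalScore_borda_eq_of_forall_isTopChoice (k := k) hTP (hV' T hRT)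
    have hS := totalScore_borda_lt_of_isTopChoice_notMem (k := k) hSne hSP hv (hRP hr) htop hrS
    linarith [hmax T hTP hTk]
  · rintro ⟨hRS, hSP, hSk⟩
    refine ⟨hSP, hSk, fun T hTP hTk => ?_⟩
    obtain rfl | hT := T.eq_empty_or_nonempty
    · rw [Finset.card_eq_zero.1 (hSk.trans hTk.symm)]
    rw [totalScore_borda_eq_of_forall_isTopChoice hSP (hV' S hRS)]
    exact totalScore_borda_le hT hTP

theorem msWinners_borda_range'_append (ks : List ℕ) (n : ℕ) (hRP : R ⊆ P)
    (hP : P.card = R.card + n) (hV : ∀ v ∈ V, ∃ r ∈ R, IsTopChoice v P r)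
    (hR : ∀ r ∈ R, ∃ v ∈ V, IsTopChoice v P r) :
    msWinners .lmax borda ((List.range' R.card n).reverse ++ ks) P V =
      msWinners .lmax borda ks R V := by
  induction n generalizing P with
  | zero =>
    obtain rfl := Finset.eq_of_subset_of_card_le hRP hP.le
    rfl
  | succ n ih =>
    have ih' : ∀ S, R ⊆ S → S ⊆ P → S.card = R.card + n →
        msWinners .lmax borda ((List.range' R.card n).reverse ++ ks) S V =
          msWinners .lmax borda ks R V := fun S hRS hSP hS =>
      ih hRS hS (fun v hv => (hV v hv).imp fun _ ⟨hr, htop⟩ => ⟨hr, htop.mono hSP⟩)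
        (fun r hr => (hR r hr).imp fun _ ⟨hv, htop⟩ => ⟨hv, htop.mono hSP⟩)
    rw [List.range'_concat, List.reverse_append, one_mul]
    ext S
    change (∃ S₁ ∈ scoreWinners .lmax borda P V (R.card + n), _) ↔ _
    rw [scoreWinners_borda_eq hRP hV hR (Nat.le_add_right _ _)]
    constructor
    · rintro ⟨S₁, ⟨hRS₁, hS₁P, hS₁⟩, hS⟩
      rwa [← ih' S₁ hRS₁ hS₁P hS₁]
    · intro hS
      obtain ⟨S₁, hRS₁, hS₁P, hS₁⟩ :=
        Finset.exists_subsuperset_card_eq (n := R.card + n) hRP (Nat.le_add_right _ _) (by omega)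
      exact ⟨S₁, ⟨hRS₁, hS₁P, hS₁⟩, (ih' S₁ hRS₁ hS₁P hS₁).symm ▸ hS⟩

end Winners

/-- A natural-number copy of `totalScore .lmax borda`, so that small elections can be settled
by `decide`. -/
def ccScore {α : Type} (P : Finset α) (V : List (α → ℕ)) (S : Finset α) : ℕ :=
  (V.map fun v => S.sup fun c => P.card - posIn v P c).sum

section NatScores

variable {α : Type} {v : α → ℕ} {P S : Finset α} {V : List (α → ℕ)} {k : ℕ}

theorem posIn_le_card (c : α) : posIn v P c ≤ P.card :=
  Finset.card_filter_le _ _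

theorem voterScore_borda_eq_natCast (hS : S.Nonempty) :
    voterScore .lmax borda P k v S = ((S.sup fun c => P.card - posIn v P c : ℕ) : ℝ) := by
  rw [voterScore_lmax_eq_sup' _ hS, ← Finset.sup'_eq_sup hS,
    Finset.apply_sup'_eq_sup'_comp hS _ fun _ _ => Nat.cast_max _ _]
  congr 1
  funext c
  simp [borda, Nat.cast_sub (posIn_le_card c)]

theorem totalScore_borda_eq_ccScore (hS : S.Nonempty) :
    totalScore .lmax borda P V k S = ccScore P V S := by
  simp only [totalScore, ccScore, Nat.cast_list_sum, List.map_map]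
  exact congrArg List.sum (List.map_congr_left fun v _ => voterScore_borda_eq_natCast hS)

theorem mem_scoreWinners_borda_iff (hk : 1 ≤ k) (hS : S ∈ P.powersetCard k) :
    S ∈ scoreWinners .lmax borda P V k ↔
      ∀ T ∈ P.powersetCard k, ccScore P V T ≤ ccScore P V S := by
  have hne : ∀ T ∈ P.powersetCard k, T.Nonempty := fun T hT =>
    Finset.card_pos.1 (((Finset.mem_powersetCard.1 hT).2).symm ▸ hk)
  have hscore : ∀ T ∈ P.powersetCard k,
      (totalScore .lmax borda P V k T ≤ totalScore .lmax borda P V k S ↔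
        ccScore P V T ≤ ccScore P V S) := fun T hT => by
    rw [totalScore_borda_eq_ccScore (hne T hT), totalScore_borda_eq_ccScore (hne S hS),
      Nat.cast_le]
  obtain ⟨hSP, hSk⟩ := Finset.mem_powersetCard.1 hS
  refine ⟨fun ⟨_, _, hmax⟩ T hT => ?_, fun h => ⟨hSP, hSk, fun T hTP hTk => ?_⟩⟩
  · obtain ⟨hTP, hTk⟩ := Finset.mem_powersetCard.1 hT
    exact (hscore T hT).1 (hmax T hTP hTk)
  · have hT : T ∈ P.powersetCard k := Finset.mem_powersetCard.2 ⟨hTP, hTk⟩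
    exact (hscore T hT).2 (h T hT)

end NatScores

/-- The ranking `x ≻ y ≻ z`, followed by all other candidates in increasing order. -/
def pref (x y z : ℕ) (c : ℕ) : ℕ :=
  if c = x then 0 else if c = y then 1 else if c = z then 2 else c + 3

def prefs (L : List (ℕ × ℕ × ℕ)) : List (ℕ → ℕ) :=
  L.map fun p => pref p.1 p.2.1 p.2.2

theorem prefs_append (L₁ L₂ : List (ℕ × ℕ × ℕ)) : prefs (L₁ ++ L₂) = prefs L₁ ++ prefs L₂ :=
  List.map_append

section Prefs

variable {x y z : ℕ} {P R : Finset ℕ} {L : List (ℕ × ℕ × ℕ)}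

theorem pref_injective : Function.Injective (pref x y z) := by
  intro a b hab
  simp only [pref] at hab
  split_ifs at hab <;> omega

theorem isTopChoice_pref : IsTopChoice (pref x y z) P x := by
  intro c _ hc
  simp only [pref, if_neg hc]
  split_ifs <;> omega

theorem strictPrefs_prefs : StrictPrefs P (prefs L) := by
  simp only [StrictPrefs, prefs, List.mem_map]
  rintro _ ⟨p, -, rfl⟩
  exact pref_injective.injOn

theorem exists_isTopChoice_of_mem_prefs (h : ∀ p ∈ L, p.1 ∈ R) :
    ∀ v ∈ prefs L, ∃ r ∈ R, IsTopChoice v P r := by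
  simp only [prefs, List.mem_map]
  rintro _ ⟨p, hp, rfl⟩
  exact ⟨p.1, h p hp, isTopChoice_pref⟩

theorem exists_mem_prefs_isTopChoice (h : ∀ r ∈ R, ∃ p ∈ L, p.1 = r) :
    ∀ r ∈ R, ∃ v ∈ prefs L, IsTopChoice v P r := by
  intro r hr
  obtain ⟨p, hp, rfl⟩ := h r hr
  exact ⟨_, List.mem_map_of_mem hp, isTopChoice_pref⟩

end Prefs

theorem validVec_range'_reverse (t : ℕ) :
    ValidVec (Finset.range (t + 1)) (List.range' 1 t).reverse := by
  refine ⟨?_, fun k hk => (List.mem_range'_1.1 (List.mem_reverse.1 hk)).1⟩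
  have := List.isChain_reverse.2 (List.pairwise_lt_range' (s := 1) (n := t + 1)).isChain
  rw [List.range'_concat, List.reverse_append, List.reverse_singleton, List.singleton_append,
    one_mul, Nat.add_comm] at this
  rw [Finset.card_range]
  exact this

theorem msWinners_range'_reverse_prefs {t : ℕ} (ht : 2 ≤ t) {L : List (ℕ × ℕ × ℕ)}
    (hL : ∀ p ∈ L, p.1 ∈ ({0, 1, 2} : Finset ℕ))
    (hR : ∀ r ∈ ({0, 1, 2} : Finset ℕ), ∃ p ∈ L, p.1 = r) :
    msWinners .lmax borda (List.range' 1 t).reverse (Finset.range (t + 1)) (prefs L) =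
      msWinners .lmax borda [2, 1] {0, 1, 2} (prefs L) := by
  have hks : (List.range' 1 t).reverse = (List.range' 3 (t - 2)).reverse ++ [2, 1] := by
    obtain ⟨n, rfl⟩ : ∃ n, t = 2 + n := ⟨t - 2, by omega⟩
    simp only [← List.range'_append, List.range'_succ, List.range'_zero, List.reverse_append,
      add_tsub_cancel_left]
    rfl
  rw [hks]
  have hRC : ({0, 1, 2} : Finset ℕ) ⊆ Finset.range (t + 1) := by
    intro c hc
    simp only [Finset.mem_insert, Finset.mem_singleton, Finset.mem_range] at hc ⊢
    omega
  have hcard : (Finset.range (t + 1)).card = ({0, 1, 2} : Finset ℕ).card + (t - 2) := by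
    rw [Finset.card_range, show ({0, 1, 2} : Finset ℕ).card = 3 from rfl]
    omega
  exact msWinners_borda_range'_append [2, 1] (t - 2) hRC hcard
    (exists_isTopChoice_of_mem_prefs hL) (exists_mem_prefs_isTopChoice hR)


def profile₁ : List (ℕ × ℕ × ℕ) := [(0, 1, 2), (1, 0, 2), (1, 2, 0), (2, 0, 1)]

def profile₂ : List (ℕ × ℕ × ℕ) := [(0, 2, 1), (2, 0, 1), (2, 1, 0), (1, 0, 2)]

theorem singleton_zero_mem_msWinners_profile₁ :
    {0} ∈ msWinners .lmax borda [2, 1] {0, 1, 2} (prefs profile₁) :=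
  ⟨{0, 1}, (mem_scoreWinners_borda_iff one_le_two (by decide)).2 (by decide),
    {0}, (mem_scoreWinners_borda_iff le_rfl (by decide)).2 (by decide), rfl⟩

theorem singleton_zero_mem_msWinners_profile₂ :
    {0} ∈ msWinners .lmax borda [2, 1] {0, 1, 2} (prefs profile₂) :=
  ⟨{0, 2}, (mem_scoreWinners_borda_iff one_le_two (by decide)).2 (by decide),
    {0}, (mem_scoreWinners_borda_iff le_rfl (by decide)).2 (by decide), rfl⟩

theorem eq_of_mem_scoreWinners_profile₁_append_profile₂ {S : Finset ℕ}
    (hS : S ∈ scoreWinners .lmax borda {0, 1, 2} (prefs (profile₁ ++ profile₂)) 2) :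
    S = {1, 2} := by
  have hmem : S ∈ ({0, 1, 2} : Finset ℕ).powersetCard 2 :=
    Finset.mem_powersetCard.2 ⟨hS.1, hS.2.1⟩
  have hunique : ∀ S ∈ ({0, 1, 2} : Finset ℕ).powersetCard 2,
      (∀ T ∈ ({0, 1, 2} : Finset ℕ).powersetCard 2,
        ccScore {0, 1, 2} (prefs (profile₁ ++ profile₂)) T ≤
          ccScore {0, 1, 2} (prefs (profile₁ ++ profile₂)) S) → S = {1, 2} := by
    decide
  exact hunique S hmem ((mem_scoreWinners_borda_iff one_le_two hmem).1 hS)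

theorem singleton_zero_notMem_msWinners_profile₁_append_profile₂ :
    {0} ∉ msWinners .lmax borda [2, 1] {0, 1, 2} (prefs (profile₁ ++ profile₂)) := by
  rintro ⟨S₁, hS₁, S₂, ⟨hS₂, -, -⟩, rfl⟩
  rw [eq_of_mem_scoreWinners_profile₁_append_profile₂ hS₁] at hS₂
  exact absurd hS₂ (by decide)

end MultistageCC

open MultistageCC in
/-- For every `t ≥ 2`, the `t`-stage `(ℓ_max, Borda)`-rule (the
Chamberlin–Courant rule, with position scores `Borda^{m,k}(p) = m − p` and
committee score `f_v(S) = max_{c ∈ S} (m − p_v(c))`, applied at every stage) does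
not satisfy Consistency. -/
theorem multistage_cc_not_consistent (t : ℕ) (ht : 2 ≤ t) :
    ¬ MSConsistent ScoreNorm.lmax (fun m _ p => (m : ℝ) - (p : ℝ)) t := by
  intro h
  change MSConsistent .lmax borda t at h
  have h₁ : {0} ∈ msWinners .lmax borda (List.range' 1 t).reverse (Finset.range (t + 1))
      (prefs profile₁) := by
    rw [msWinners_range'_reverse_prefs ht (by decide) (by decide)]
    exact singleton_zero_mem_msWinners_profile₁
  have h₂ : {0} ∈ msWinners .lmax borda (List.range' 1 t).reverse (Finset.range (t + 1))
      (prefs profile₂) := by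
    rw [msWinners_range'_reverse_prefs ht (by decide) (by decide)]
    exact singleton_zero_mem_msWinners_profile₂
  have h₁₂ : {0} ∉ msWinners .lmax borda (List.range' 1 t).reverse (Finset.range (t + 1))
      (prefs profile₁ ++ prefs profile₂) := by
    rw [← prefs_append, msWinners_range'_reverse_prefs ht (by decide) (by decide)]
    exact singleton_zero_notMem_msWinners_profile₁_append_profile₂
  have hks : (List.range' 1 t).reverse ≠ [] := by
    simpa only [ne_eq, List.reverse_eq_nil_iff, List.range'_eq_nil_iff] using by omega
  rw [h _ _ _ _ strictPrefs_prefs strictPrefs_prefs _ hks (by simp) (validVec_range'_reverse t)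
    ⟨{0}, h₁, h₂⟩] at h₁₂
  exact h₁₂ ⟨h₁, h₂⟩
end

section
/- Let R be a single-stage ω-Thiele rule. If R satisfies Committee Monotonicity, then ω(i) − ω(i−1) = ω(j) − ω(j−1) for all integers i, j ≥ 1. -/
/-- The ω-Thiele score of a committee `S`, given voters identified with their
approval ballots: `Σ_{v ∈ V} ω(|S ∩ A_v|)`. -/
noncomputable def thieleScore {α : Type} [DecidableEq α] (ω : ℕ → ℝ)
    (V : List (Finset α)) (S : Finset α) : ℝ :=
  (V.map fun A => ω (S ∩ A).card).sum

/-- Winning committees of the single-stage ω-Thiele rule on the candidate pool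
`C` with target size `k`: all size-`k` committees maximizing the ω-Thiele score. -/
def thieleWinners {α : Type} [DecidableEq α] (ω : ℕ → ℝ)
    (C : Finset α) (V : List (Finset α)) (k : ℕ) : Set (Finset α) :=
  {S | S ⊆ C ∧ S.card = k ∧
    ∀ T ⊆ C, T.card = k → thieleScore ω V T ≤ thieleScore ω V S}

/-- Committee Monotonicity of the single-stage ω-Thiele rule: for every election
(over any candidate type, ballots drawn from the candidate set) and every `k`,
(i) every size-`k` winning committee extends to a size-`(k+1)` winning committee,
and (ii) every size-`(k+1)` winning committee contains a size-`k` winning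
committee. -/
def ThieleCommitteeMonotone (ω : ℕ → ℝ) : Prop :=
  ∀ (α : Type) [DecidableEq α] (C : Finset α) (V : List (Finset α)),
    (∀ A ∈ V, A ⊆ C) →
    ∀ k : ℕ, 1 ≤ k → k + 1 < C.card →
      (∀ S ∈ thieleWinners ω C V k, ∃ S' ∈ thieleWinners ω C V (k + 1), S ⊂ S') ∧
      (∀ S ∈ thieleWinners ω C V (k + 1), ∃ S' ∈ thieleWinners ω C V k, S' ⊂ S)

/-!
By induction, `ω i = i * ω 1`. Suppose this holds for `i ≤ n`, with `n ≥ 1`. Both elections below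
consist of pairs of complementary ballots `B`, `C \ B` in the candidate set `C`; such a pair
contributes `#T * ω 1` to the score of a committee `T` as long as neither ballot meets `T` in more
than `n` candidates. Hence all committees of size `n` tie, all of them win, and Committee
Monotonicity forces each of them to extend to a winner of size `n + 1`.

* If `ω (n + 1) > (n + 1) * ω 1`, take `C = A ⊔ B` with `#A = n + 1`, `#B = n` and ballots `A`, `B`.
  Every extension of `B` scores `(n + 1) * ω 1`, but `A` scores `ω (n + 1)`.
* If `ω (n + 1) < (n + 1) * ω 1`, take `C = X ⊔ {a, b}` with `#X = n` and ballots `{a}`, `C \ {a}`,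
  `{b}`, `C \ {b}`. The extensions `X ∪ {a}`, `X ∪ {b}` of `X` score `ω (n + 1) + (n + 1) * ω 1`,
  but `C` minus a point of `X` scores `2 * (n + 1) * ω 1`.
-/

open Finset

section Score

variable {α : Type} [DecidableEq α] {ω : ℕ → ℝ}

theorem thieleScore_nil (S : Finset α) : thieleScore ω [] S = 0 := rfl

theorem thieleScore_cons_cons_sdiff {C T : Finset α} (hT : T ⊆ C) (B : Finset α)
    (V : List (Finset α)) :
    thieleScore ω (B :: (C \ B) :: V) T = ω #(T ∩ B) + ω #(T \ B) + thieleScore ω V T := by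
  simp [thieleScore, ← inter_sdiff_assoc, inter_eq_left.2 hT, add_assoc]

theorem apply_card_inter_add_apply_card_sdiff {n : ℕ} (hlin : ∀ i ≤ n, ω i = ω 1 * i)
    {T B : Finset α} (hTB : #(T ∩ B) ≤ n) (hTB' : #(T \ B) ≤ n) :
    ω #(T ∩ B) + ω #(T \ B) = ω 1 * #T := by
  rw [hlin _ hTB, hlin _ hTB', ← mul_add, ← Nat.cast_add, card_inter_add_card_sdiff]

theorem apply_card_inter_singleton_add_apply_card_sdiff_singleton {n : ℕ} (hn : 1 ≤ n)
    (hlin : ∀ i ≤ n, ω i = ω 1 * i) {T : Finset α} {y : α} (hT : #T ≤ n + 1)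
    (hyT : y ∈ T ∨ #T ≤ n) : ω #(T ∩ {y}) + ω #(T \ {y}) = ω 1 * #T := by
  refine apply_card_inter_add_apply_card_sdiff hlin ?_ ?_
  · exact (card_le_card inter_subset_right).trans (card_singleton y ▸ hn)
  · obtain hy | hTn := hyT
    · rw [card_sdiff_of_subset (singleton_subset_iff.2 hy), card_singleton]
      omega
    · exact (card_le_card sdiff_subset).trans hTn

theorem apply_card_inter_add_apply_card_sdiff_of_disjoint (h0 : ω 0 = 0) {T B : Finset α}
    (hTB : Disjoint T B) : ω #(T ∩ B) + ω #(T \ B) = ω #T := by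
  rw [disjoint_iff_inter_eq_empty.1 hTB, sdiff_eq_self_of_disjoint hTB, card_empty, h0, zero_add]

theorem mem_thieleWinners_of_forall_score_eq {C : Finset α} {V : List (Finset α)} {k : ℕ}
    {s : ℝ} (hscore : ∀ T ⊆ C, #T = k → thieleScore ω V T = s) {S : Finset α} (hSC : S ⊆ C)
    (hS : #S = k) : S ∈ thieleWinners ω C V k :=
  ⟨hSC, hS, fun T hTC hT => ((hscore T hTC hT).trans (hscore S hSC hS).symm).le⟩

theorem ThieleCommitteeMonotone.exists_ssuperset_mem_thieleWinners
    (hCM : ThieleCommitteeMonotone ω) {C : Finset α} {V : List (Finset α)}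
    (hV : ∀ A ∈ V, A ⊆ C) {k : ℕ} (hk : 1 ≤ k) (hkC : k + 1 < #C) {s : ℝ}
    (hscore : ∀ T ⊆ C, #T = k → thieleScore ω V T = s) {S : Finset α} (hSC : S ⊆ C)
    (hS : #S = k) : ∃ S' ∈ thieleWinners ω C V (k + 1), S ⊂ S' :=
  (hCM α C V hV k hk hkC).1 S (mem_thieleWinners_of_forall_score_eq hscore hSC hS)

end Score

theorem Finset.mem_and_notMem_or_of_sdiff_pair_ssubset {α : Type} [DecidableEq α]
    {C S : Finset α} {a b : α} (habC : {a, b} ⊆ C) (hS : C \ {a, b} ⊂ S) (hSC : S ⊂ C) :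
    a ∈ S ∧ b ∉ S ∨ b ∈ S ∧ a ∉ S := by
  by_cases ha : a ∈ S <;> by_cases hb : b ∈ S
  · refine absurd hSC (not_ssubset_of_subset ?_)
    rw [← union_sdiff_of_subset habC]
    exact union_subset (insert_subset ha (singleton_subset_iff.2 hb)) hS.subset
  · exact .inl ⟨ha, hb⟩
  · exact .inr ⟨hb, ha⟩
  · refine absurd hS (not_ssubset_of_subset fun y hy => ?_)
    simp only [mem_sdiff, mem_insert, mem_singleton]
    exact ⟨hSC.subset hy, by rintro (rfl | rfl) <;> contradiction⟩

namespace ThieleCommitteeMonotone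

variable {ω : ℕ → ℝ}

theorem apply_succ_le (hCM : ThieleCommitteeMonotone ω) (h0 : ω 0 = 0) {n : ℕ} (hn : 1 ≤ n)
    (hlin : ∀ i ≤ n, ω i = ω 1 * i) : ω (n + 1) ≤ ω 1 * (n + 1) := by
  obtain ⟨C, A, hAC, hA, hC⟩ : ∃ C A : Finset ℕ, A ⊆ C ∧ #A = n + 1 ∧ #C = 2 * n + 1 :=
    ⟨range (2 * n + 1), range (n + 1), range_subset_range.2 (by omega), card_range _,
      card_range _⟩
  have hV : ∀ B ∈ [A, C \ A], B ⊆ C := by simp [hAC]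
  have hscore : ∀ T ⊆ C, thieleScore ω [A, C \ A] T = ω #(T ∩ A) + ω #(T \ A) := fun T hT => by
    rw [thieleScore_cons_cons_sdiff hT, thieleScore_nil, add_zero]
  have hCA : #(C \ A) = n := by rw [card_sdiff_of_subset hAC]; omega
  have hsdiff : ∀ T ⊆ C, #(T \ A) ≤ n := fun T hT =>
    hCA ▸ card_le_card (sdiff_subset_sdiff hT subset_rfl)
  have htie : ∀ T ⊆ C, #T = n → thieleScore ω [A, C \ A] T = ω 1 * n := by
    intro T hT hTn
    rw [hscore T hT, apply_card_inter_add_apply_card_sdiff hlin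
      (hTn ▸ card_le_card inter_subset_left) (hsdiff T hT), hTn]
  obtain ⟨S', ⟨hS'C, hS', hS'max⟩, hsub⟩ :=
    hCM.exists_ssuperset_mem_thieleWinners hV hn (by omega) htie sdiff_subset hCA
  -- `S'` adds a single candidate to `C \ A`, so it meets `A` at most once.
  have hS'A : #(S' ∩ A) ≤ n := by
    have : S' ∩ A ⊆ S' \ (C \ A) := fun x hx => by
      simp only [mem_inter, mem_sdiff] at hx ⊢
      tauto
    have := card_le_card this
    rw [card_sdiff_of_subset hsub.subset, hS', hCA] at this
    omega
  have hAS' := hS'max A hAC hA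
  rw [hscore A hAC, hscore S' hS'C, inter_self, sdiff_self, bot_eq_empty, card_empty, h0,
    add_zero, hA, apply_card_inter_add_apply_card_sdiff hlin hS'A (hsdiff S' hS'C), hS'] at hAS'
  exact_mod_cast hAS'

theorem le_apply_succ (hCM : ThieleCommitteeMonotone ω) (h0 : ω 0 = 0) {n : ℕ} (hn : 1 ≤ n)
    (hlin : ∀ i ≤ n, ω i = ω 1 * i) : ω 1 * (n + 1) ≤ ω (n + 1) := by
  obtain ⟨C, a, b, x, ha, hb, hx, hab, hxa, hxb, hC⟩ : ∃ (C : Finset ℕ) (a b x : ℕ),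
      a ∈ C ∧ b ∈ C ∧ x ∈ C ∧ a ≠ b ∧ x ≠ a ∧ x ≠ b ∧ #C = n + 2 :=
    ⟨range (n + 2), 0, 1, 2, by simp, by simp, by simp; omega, by simp, by simp, by simp,
      card_range _⟩
  set V : List (Finset ℕ) := [{a}, C \ {a}, {b}, C \ {b}]
  have hV : ∀ B ∈ V, B ⊆ C := by simp [V, ha, hb]
  have hscore : ∀ T ⊆ C, thieleScore ω V T =
      ω #(T ∩ {a}) + ω #(T \ {a}) + (ω #(T ∩ {b}) + ω #(T \ {b})) := fun T hT => by
    rw [thieleScore_cons_cons_sdiff hT, thieleScore_cons_cons_sdiff hT, thieleScore_nil,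
      add_zero]
  have hpair {T : Finset ℕ} {y : ℕ} :=
    apply_card_inter_singleton_add_apply_card_sdiff_singleton (T := T) (y := y) hn hlin
  have htie : ∀ T ⊆ C, #T = n → thieleScore ω V T = 2 * (ω 1 * n) := by
    intro T hT hTn
    rw [hscore T hT, hpair (by omega) (.inr hTn.le), hpair (by omega) (.inr hTn.le), hTn]
    ring
  have habC : {a, b} ⊆ C := insert_subset ha (singleton_subset_iff.2 hb)
  have hX : #(C \ {a, b}) = n := by
    rw [card_sdiff_of_subset habC, card_pair hab]
    omega
  obtain ⟨S', ⟨hS'C, hS', hS'max⟩, hsub⟩ :=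
    hCM.exists_ssuperset_mem_thieleWinners hV hn (by omega) htie sdiff_subset hX
  have hS'score : thieleScore ω V S' = ω (n + 1) + ω 1 * (n + 1) := by
    rw [hscore S' hS'C]
    obtain ⟨ha', hb'⟩ | ⟨hb', ha'⟩ := mem_and_notMem_or_of_sdiff_pair_ssubset habC hsub
      (ssubset_of_subset_of_ne hS'C (by rintro rfl; omega))
    · rw [hpair hS'.le (.inl ha'),
        apply_card_inter_add_apply_card_sdiff_of_disjoint h0 (disjoint_singleton_right.2 hb'), hS']
      push_cast
      ring
    · rw [hpair hS'.le (.inl hb'),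
        apply_card_inter_add_apply_card_sdiff_of_disjoint h0 (disjoint_singleton_right.2 ha'), hS']
      push_cast
      ring
  have hW : #(C.erase x) = n + 1 := by rw [card_erase_of_mem hx, hC]; rfl
  have hWscore : thieleScore ω V (C.erase x) = 2 * (ω 1 * (n + 1)) := by
    rw [hscore _ (erase_subset x C), hpair hW.le (.inl (mem_erase.2 ⟨hxa.symm, ha⟩)),
      hpair hW.le (.inl (mem_erase.2 ⟨hxb.symm, hb⟩)), hW]
    push_cast
    ring
  have := hS'max _ (erase_subset x C) hW
  rw [hWscore, hS'score] at this
  linarith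

theorem apply_eq_mul (hCM : ThieleCommitteeMonotone ω) (h0 : ω 0 = 0) (n : ℕ) :
    ω n = ω 1 * n := by
  suffices ∀ i ≤ n, ω i = ω 1 * i from this n le_rfl
  induction n with
  | zero => intro i hi; simp [Nat.le_zero.1 hi, h0]
  | succ n ih =>
    intro i hi
    obtain hi | rfl := Nat.lt_or_eq_of_le hi
    · exact ih i (by omega)
    obtain rfl | hn := Nat.eq_zero_or_pos n
    · simp
    · push_cast
      exact le_antisymm (hCM.apply_succ_le h0 hn ih) (hCM.le_apply_succ h0 hn ih)

end ThieleCommitteeMonotone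

theorem thiele_committee_monotone_linear_general (ω : ℕ → ℝ)
    (h0 : ω 0 = 0)
    (hCM : ThieleCommitteeMonotone ω) :
    ∀ i j : ℕ, 1 ≤ i → 1 ≤ j → ω i - ω (i - 1) = ω j - ω (j - 1) := by
  have hstep : ∀ i, 1 ≤ i → ω i - ω (i - 1) = ω 1 := fun i hi => by
    rw [hCM.apply_eq_mul h0, hCM.apply_eq_mul h0 (i - 1), Nat.cast_sub hi]
    ring
  intro i j hi hj
  rw [hstep i hi, hstep j hj]

/-- If a single-stage ω-Thiele rule (ω nondecreasing with
`ω(0) = 0`) satisfies Committee Monotonicity, then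
`ω(i) − ω(i−1) = ω(j) − ω(j−1)` for all integers `i, j ≥ 1`. -/
theorem thiele_committee_monotone_linear (ω : ℕ → ℝ)
    (hmono : Monotone ω) (h0 : ω 0 = 0)
    (hCM : ThieleCommitteeMonotone ω) :
    ∀ i j : ℕ, 1 ≤ i → 1 ≤ j → ω i - ω (i - 1) = ω j - ω (j - 1) :=
  thiele_committee_monotone_linear_general ω h0 hCM
end

section
/- A single-stage ω-Thiele rule satisfies Committee Monotonicity if and only if ω(i) − ω(i−1) = ω(1) − ω(0) for all integers i ≥ 1 (i.e., ω is linear). -/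
/-!
If `ω s = s * ω 1`, the score of a committee is a sum of per-candidate weights, so adding a best
outside candidate to a winner, or removing a worst member, yields a winner of the adjacent size.

Conversely, let `m + 2` be the least argument at which `ω` is not linear. Committees of size
`m + 1` only see the linear part of `ω` and are scored as in approval voting, up to the factor
`ω 1`; the increment `ω (m + 2) - ω (m + 1)` is felt first at size `m + 2`. Whether it is larger
or smaller than `ω 1`, an election with large, suitably weighted groups of voters has an
`(m + 1)`-winner none of whose extensions wins with `m + 2` seats.
-/

open Finset

namespace Finset

variable {α : Type*} [DecidableEq α] {T X : Finset α} {a : α}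

lemma card_inter_insert_of_notMem (ha : a ∉ X) :
    #(T ∩ insert a X) = #(T ∩ X) + #(T ∩ {a}) := by
  rw [insert_eq, inter_union_distrib_left, add_comm, card_union_of_disjoint]
  exact (disjoint_singleton_left.2 ha).mono inter_subset_right inter_subset_right

lemma card_inter_singleton_le : #(T ∩ {a}) ≤ 1 :=
  (card_le_card inter_subset_right).trans (card_singleton a).le

lemma card_inter_add_card_inter_singleton_le (ha : a ∉ X) : #(T ∩ X) + #(T ∩ {a}) ≤ #T :=
  card_inter_insert_of_notMem ha ▸ card_le_card inter_subset_left

end Finset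

section Score

variable {α : Type} [DecidableEq α] (ω : ℕ → ℝ)

lemma thieleScore_append (V W : List (Finset α)) (S : Finset α) :
    thieleScore ω (V ++ W) S = thieleScore ω V S + thieleScore ω W S := by
  simp [thieleScore]

lemma thieleScore_replicate (n : ℕ) (A S : Finset α) :
    thieleScore ω (List.replicate n A) S = n * ω #(S ∩ A) := by
  simp [thieleScore, List.sum_replicate]

lemma exists_thieleScore_eq_sum {c : ℝ} (hω : ∀ s, ω s = s * c) (V : List (Finset α)) :
    ∃ w : α → ℝ, ∀ S, thieleScore ω V S = ∑ x ∈ S, w x := by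
  induction V with
  | nil => exact ⟨0, fun S => by simp [thieleScore]⟩
  | cons A V ih =>
    obtain ⟨w, hw⟩ := ih
    refine ⟨fun x => (if x ∈ A then c else 0) + w x, fun S => ?_⟩
    rw [sum_add_distrib, sum_ite_mem, sum_const, nsmul_eq_mul, ← hω, ← hw]
    simp [thieleScore]

end Score

section Additive

variable {α : Type} [DecidableEq α] {ω : ℕ → ℝ} {C : Finset α} {V : List (Finset α)}
  {w : α → ℝ} {k : ℕ} {S : Finset α}

lemma exists_insert_mem_thieleWinners (hw : ∀ S, thieleScore ω V S = ∑ x ∈ S, w x)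
    (hS : S ∈ thieleWinners ω C V k) (hk : k < #C) :
    ∃ x ∉ S, insert x S ∈ thieleWinners ω C V (k + 1) := by
  obtain ⟨hSC, hScard, hSmax⟩ := hS
  obtain ⟨x, hx, hxmax⟩ := exists_max_image (C \ S) w
    (card_pos.1 (by rw [card_sdiff_of_subset hSC]; omega))
  obtain ⟨hxC, hxS⟩ := mem_sdiff.1 hx
  refine ⟨x, hxS, insert_subset hxC hSC, by rw [card_insert_of_notMem hxS, hScard], ?_⟩
  intro T hTC hTcard
  obtain ⟨y, hyT, hyS⟩ := not_subset.1 fun h : T ⊆ S => by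
    have := card_le_card h; omega
  have hTy := hSmax (T.erase y) ((erase_subset _ _).trans hTC)
    (by rw [card_erase_of_mem hyT, hTcard]; rfl)
  have hwy := hxmax y (mem_sdiff.2 ⟨hTC hyT, hyS⟩)
  rw [hw, hw] at hTy ⊢
  rw [← sum_erase_add T w hyT, sum_insert hxS]
  linarith

lemma exists_erase_mem_thieleWinners (hw : ∀ S, thieleScore ω V S = ∑ x ∈ S, w x)
    (hS : S ∈ thieleWinners ω C V (k + 1)) :
    ∃ x ∈ S, S.erase x ∈ thieleWinners ω C V k := by
  obtain ⟨hSC, hScard, hSmax⟩ := hS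
  obtain ⟨x, hxS, hxmin⟩ := exists_min_image S w (card_pos.1 (by omega))
  refine ⟨x, hxS, (erase_subset _ _).trans hSC, by rw [card_erase_of_mem hxS, hScard]; rfl, ?_⟩
  intro T hTC hTcard
  obtain ⟨y, hyS, hyT⟩ := not_subset.1 fun h : S ⊆ T => by
    have := card_le_card h; omega
  have hTy := hSmax (insert y T) (insert_subset (hSC hyS) hTC)
    (by rw [card_insert_of_notMem hyT, hTcard])
  have hwy := hxmin y hyS
  rw [hw, hw] at hTy ⊢
  rw [sum_insert hyT, ← sum_erase_add S w hxS] at hTy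
  linarith

end Additive

theorem thieleCommitteeMonotone_of_eq_mul {ω : ℕ → ℝ} {c : ℝ} (hω : ∀ s, ω s = s * c) :
    ThieleCommitteeMonotone ω := by
  intro α _ C V _ k _ hkC
  obtain ⟨w, hw⟩ := exists_thieleScore_eq_sum ω hω V
  refine ⟨fun S hS => ?_, fun S hS => ?_⟩
  · obtain ⟨x, hxS, hx⟩ := exists_insert_mem_thieleWinners hw hS (by omega)
    exact ⟨_, hx, ssubset_insert hxS⟩
  · obtain ⟨x, hxS, hx⟩ := exists_erase_mem_thieleWinners hw hS
    exact ⟨_, hx, erase_ssubset hxS⟩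

section ConvexElection

variable {ω : ℕ → ℝ} {m n : ℕ}

/-- When `ω (m + 2) - ω (m + 1)` exceeds `ω 1` and `n` is large, `insert (m + 2) (range m)` wins
with `m + 1` seats, but every committee of size `m + 2` containing `m + 2` loses to
`range (m + 2)`. -/
def convexElection (m n : ℕ) : List (Finset ℕ) :=
  List.replicate n (range (m + 2)) ++ List.replicate (n + 1) {m + 2}

lemma subset_range_of_mem_convexElection {A : Finset ℕ} (hA : A ∈ convexElection m n) :
    A ⊆ range (m + 3) := by
  simp only [convexElection, List.mem_append, List.mem_replicate] at hA
  rcases hA with ⟨-, rfl⟩ | ⟨-, rfl⟩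
  · exact range_subset_range.2 (by omega)
  · simp

lemma thieleScore_convexElection (T : Finset ℕ) :
    thieleScore ω (convexElection m n) T =
      n * ω #(T ∩ range (m + 2)) + (n + 1) * ω #(T ∩ {m + 2}) := by
  rw [convexElection, thieleScore_append, thieleScore_replicate, thieleScore_replicate]
  push_cast; rfl

lemma thieleScore_convexElection_le (hω1 : 0 ≤ ω 1) (hlin : ∀ s ≤ m + 1, ω s = s * ω 1)
    {T : Finset ℕ} (hT : #(T ∩ range (m + 2)) ≤ m + 1) :
    thieleScore ω (convexElection m n) T ≤ (n * #T + 1) * ω 1 := by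
  have hcard := (Nat.cast_le (α := ℝ)).2
    (card_inter_add_card_inter_singleton_le (T := T) (notMem_range_self (n := m + 2)))
  have hi := (Nat.cast_le (α := ℝ)).2 (card_inter_singleton_le (T := T) (a := m + 2))
  rw [thieleScore_convexElection, hlin _ hT, hlin _ (card_inter_singleton_le.trans (by omega))]
  push_cast at hcard hi
  nlinarith [mul_nonneg n.cast_nonneg (mul_nonneg (sub_nonneg.2 hcard) hω1),
    mul_nonneg (sub_nonneg.2 hi) hω1]

lemma insert_range_mem_thieleWinners_convexElection (hω1 : 0 ≤ ω 1)
    (hlin : ∀ s ≤ m + 1, ω s = s * ω 1) :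
    insert (m + 2) (range m) ∈ thieleWinners ω (range (m + 3)) (convexElection m n) (m + 1) := by
  refine ⟨fun x => by simp; omega, by simp, fun T _ hT => ?_⟩
  have hX : insert (m + 2) (range m) ∩ range (m + 2) = range m := by
    rw [insert_inter_of_notMem notMem_range_self, range_inter_range, min_eq_left (by omega)]
  calc thieleScore ω (convexElection m n) T ≤ (n * #T + 1) * ω 1 :=
        thieleScore_convexElection_le hω1 hlin (hT ▸ card_le_card inter_subset_left)
    _ = thieleScore ω (convexElection m n) (insert (m + 2) (range m)) := by
        rw [thieleScore_convexElection, hX, inter_singleton_of_mem (mem_insert_self _ _),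
          card_range, card_singleton, hlin m (by omega), hT]
        push_cast; ring

lemma not_thieleCommitteeMonotone_of_lt_sub (hω1 : 0 ≤ ω 1)
    (hlin : ∀ s ≤ m + 1, ω s = s * ω 1) (hd : ω 1 < ω (m + 2) - ω (m + 1)) :
    ¬ ThieleCommitteeMonotone ω := by
  intro hCM
  obtain ⟨n, hn⟩ := exists_lt_nsmul (sub_pos.2 hd) (ω 1)
  obtain ⟨S, ⟨-, hScard, hSmax⟩, hS₀S⟩ :=
    (hCM ℕ (range (m + 3)) (convexElection m n) (fun _ => subset_range_of_mem_convexElection)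
      (m + 1) (by omega) (by simp)).1 _ (insert_range_mem_thieleWinners_convexElection hω1 hlin)
  have hSX : #(S ∩ range (m + 2)) ≤ m + 1 := by
    have := card_inter_add_card_inter_singleton_le (T := S) (notMem_range_self (n := m + 2))
    rw [inter_singleton_of_mem (hS₀S.subset (mem_insert_self _ _)), card_singleton] at this
    omega
  have hXS := hSmax (range (m + 2)) (range_subset_range.2 (by omega)) (card_range _)
  rw [thieleScore_convexElection, inter_self, card_range,
    inter_singleton_of_notMem notMem_range_self, card_empty, hlin 0 (by omega)] at hXS
  have hSbound := thieleScore_convexElection_le (n := n) hω1 hlin hSX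
  rw [hScard] at hSbound
  rw [nsmul_eq_mul, hlin (m + 1) le_rfl] at hn
  push_cast at hXS hSbound hn
  linarith

end ConvexElection

section ConcaveElection

variable {ω : ℕ → ℝ} {m n : ℕ}

/-- When `ω (m + 2) - ω (m + 1)` is below `ω 1` and `n` is large, `range (m + 1)` wins with
`m + 1` seats, but its extensions by `m + 1` or `m + 2` lose to
`insert (m + 1) (insert (m + 2) (range m))`: adding `m + 1` to `range (m + 1)` gains
`(n + 1) * (ω (m + 2) - ω (m + 1)) + n * ω 1`, while trading `0` for both `m + 1` and `m + 2`
gains `2 * n * ω 1`. -/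
def concaveElection (m n : ℕ) : List (Finset ℕ) :=
  List.replicate (n + 1) (insert (m + 1) (range (m + 1))) ++
    (List.replicate (n + 1) (insert (m + 2) (range (m + 1))) ++
      (List.replicate n {m + 1} ++ List.replicate n {m + 2}))

lemma subset_range_of_mem_concaveElection {A : Finset ℕ} (hA : A ∈ concaveElection m n) :
    A ⊆ range (m + 3) := by
  simp only [concaveElection, List.mem_append, List.mem_replicate] at hA
  rcases hA with ⟨-, rfl⟩ | ⟨-, rfl⟩ | ⟨-, rfl⟩ | ⟨-, rfl⟩ <;>
    intro x <;> simp <;> omega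

lemma thieleScore_concaveElection (T : Finset ℕ) :
    thieleScore ω (concaveElection m n) T =
      (n + 1) * ω (#(T ∩ range (m + 1)) + #(T ∩ {m + 1})) +
        (n + 1) * ω (#(T ∩ range (m + 1)) + #(T ∩ {m + 2})) +
        n * ω #(T ∩ {m + 1}) + n * ω #(T ∩ {m + 2}) := by
  simp only [concaveElection, thieleScore_append, thieleScore_replicate,
    card_inter_insert_of_notMem notMem_range_self,
    card_inter_insert_of_notMem (by simp : m + 2 ∉ range (m + 1))]
  push_cast; ring

lemma card_inter_range_add_card_inter_singletons_le (T : Finset ℕ) :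
    #(T ∩ range (m + 1)) + #(T ∩ {m + 1}) + #(T ∩ {m + 2}) ≤ #T := by
  have := card_inter_add_card_inter_singleton_le (T := T)
    (by simp : m + 2 ∉ insert (m + 1) (range (m + 1)))
  rwa [card_inter_insert_of_notMem notMem_range_self] at this

lemma thieleScore_concaveElection_le (hω1 : 0 ≤ ω 1) (hlin : ∀ s ≤ m + 1, ω s = s * ω 1)
    {T : Finset ℕ} (hT : #T ≤ m + 1) :
    thieleScore ω (concaveElection m n) T ≤ 2 * (n + 1) * #T * ω 1 := by
  have hcard := card_inter_range_add_card_inter_singletons_le (m := m) T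
  rw [thieleScore_concaveElection]
  set t := #(T ∩ range (m + 1))
  set i := #(T ∩ {m + 1})
  set j := #(T ∩ {m + 2})
  rw [hlin (t + i) (by omega), hlin (t + j) (by omega), hlin i (by omega), hlin j (by omega)]
  have hcard' := (Nat.cast_le (α := ℝ)).2 hcard
  push_cast at hcard' ⊢
  have hn1 : (0 : ℝ) ≤ n + 1 := by positivity
  nlinarith [mul_nonneg (mul_nonneg hn1 (sub_nonneg.2 hcard')) hω1,
    mul_nonneg (add_nonneg i.cast_nonneg j.cast_nonneg) hω1]

lemma range_mem_thieleWinners_concaveElection (hω1 : 0 ≤ ω 1)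
    (hlin : ∀ s ≤ m + 1, ω s = s * ω 1) :
    range (m + 1) ∈ thieleWinners ω (range (m + 3)) (concaveElection m n) (m + 1) := by
  refine ⟨range_subset_range.2 (by omega), card_range _, fun T _ hT => ?_⟩
  refine (thieleScore_concaveElection_le hω1 hlin hT.le).trans_eq ?_
  rw [thieleScore_concaveElection, inter_self, inter_singleton_of_notMem notMem_range_self,
    inter_singleton_of_notMem (by simp), card_range, card_empty, add_zero,
    hlin (m + 1) le_rfl, hlin 0 (by omega), hT]
  push_cast; ring

lemma thieleScore_concaveElection_le_of_range_ssubset (hω1 : 0 ≤ ω 1)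
    (hlin : ∀ s ≤ m + 1, ω s = s * ω 1) (hstep : ω (m + 1) ≤ ω (m + 2)) {S : Finset ℕ}
    (hS : range (m + 1) ⊂ S) (hScard : #S = m + 2) :
    thieleScore ω (concaveElection m n) S ≤
      (n + 1) * ω (m + 2) + (n + 1) * ((m + 1) * ω 1) + n * ω 1 := by
  have hSX : S ∩ range (m + 1) = range (m + 1) := inter_eq_right.2 hS.subset
  have hij := card_inter_range_add_card_inter_singletons_le (m := m) S
  rw [hSX, card_range, hScard] at hij
  rw [hlin (m + 1) le_rfl] at hstep
  rw [thieleScore_concaveElection, hSX, card_range]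
  obtain ⟨hi, hj⟩ | ⟨hi, hj⟩ | ⟨hi, hj⟩ :
      (#(S ∩ {m + 1}) = 0 ∧ #(S ∩ {m + 2}) = 0) ∨
        (#(S ∩ {m + 1}) = 1 ∧ #(S ∩ {m + 2}) = 0) ∨
        (#(S ∩ {m + 1}) = 0 ∧ #(S ∩ {m + 2}) = 1) := by omega
  all_goals
    simp only [hi, hj, add_zero, hlin (m + 1) le_rfl, hlin 0 (Nat.zero_le _)]
    push_cast at hstep ⊢
    nlinarith [mul_nonneg n.cast_nonneg hω1]

lemma thieleScore_concaveElection_insert_insert (hlin : ∀ s ≤ m + 1, ω s = s * ω 1) :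
    thieleScore ω (concaveElection m n) (insert (m + 1) (insert (m + 2) (range m))) =
      2 * (n + 1) * ((m + 1) * ω 1) + 2 * n * ω 1 := by
  have hX : insert (m + 1) (insert (m + 2) (range m)) ∩ range (m + 1) = range m := by
    rw [insert_inter_of_notMem notMem_range_self, insert_inter_of_notMem (by simp),
      range_inter_range, min_eq_left (by omega)]
  rw [thieleScore_concaveElection, hX, inter_singleton_of_mem (by simp),
    inter_singleton_of_mem (by simp), card_range, card_singleton, card_singleton,
    hlin (m + 1) le_rfl]
  push_cast; ring

lemma not_thieleCommitteeMonotone_of_sub_lt (hω1 : 0 ≤ ω 1)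
    (hlin : ∀ s ≤ m + 1, ω s = s * ω 1) (hstep : ω (m + 1) ≤ ω (m + 2))
    (hd : ω (m + 2) - ω (m + 1) < ω 1) : ¬ ThieleCommitteeMonotone ω := by
  intro hCM
  obtain ⟨n, hn⟩ := exists_lt_nsmul (sub_pos.2 hd) (ω (m + 2) - ω (m + 1))
  obtain ⟨S, ⟨-, hScard, hSmax⟩, hXS⟩ :=
    (hCM ℕ (range (m + 3)) (concaveElection m n) (fun _ => subset_range_of_mem_concaveElection)
      (m + 1) (by omega) (by simp)).1 _ (range_mem_thieleWinners_concaveElection hω1 hlin)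
  have hWS := hSmax (insert (m + 1) (insert (m + 2) (range m))) (fun x => by simp; omega)
    (by simp)
  rw [thieleScore_concaveElection_insert_insert hlin] at hWS
  have hSbound :=
    thieleScore_concaveElection_le_of_range_ssubset (n := n) hω1 hlin hstep hXS hScard
  rw [nsmul_eq_mul, hlin (m + 1) le_rfl] at hn
  push_cast at hn
  linarith

end ConcaveElection

lemma sub_eq_of_thieleCommitteeMonotone {ω : ℕ → ℝ} {m : ℕ} (hmono : Monotone ω)
    (hCM : ThieleCommitteeMonotone ω) (hlin : ∀ s ≤ m + 1, ω s = s * ω 1) :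
    ω (m + 2) - ω (m + 1) = ω 1 := by
  have hω1 : 0 ≤ ω 1 := by simpa [hlin 0 (Nat.zero_le _)] using hmono zero_le_one
  rcases lt_trichotomy (ω (m + 2) - ω (m + 1)) (ω 1) with hd | hd | hd
  · exact absurd hCM (not_thieleCommitteeMonotone_of_sub_lt hω1 hlin (hmono (by omega)) hd)
  · exact hd
  · exact absurd hCM (not_thieleCommitteeMonotone_of_lt_sub hω1 hlin hd)

lemma eq_mul_of_thieleCommitteeMonotone {ω : ℕ → ℝ} (hmono : Monotone ω) (h0 : ω 0 = 0)
    (hCM : ThieleCommitteeMonotone ω) (s : ℕ) : ω s = s * ω 1 := by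
  suffices ∀ m, ∀ s ≤ m + 1, ω s = s * ω 1 from this s s (by omega)
  intro m
  induction m with
  | zero => intro s hs; interval_cases s <;> simp [h0]
  | succ m ih =>
    intro s hs
    obtain hs | rfl : s ≤ m + 1 ∨ s = m + 2 := by omega
    · exact ih s hs
    · have := sub_eq_of_thieleCommitteeMonotone hmono hCM ih
      rw [ih (m + 1) le_rfl] at this
      push_cast at this ⊢
      linarith

lemma forall_sub_eq_iff_eq_mul {ω : ℕ → ℝ} (h0 : ω 0 = 0) :
    (∀ i : ℕ, 1 ≤ i → ω i - ω (i - 1) = ω 1 - ω 0) ↔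
      ∀ s : ℕ, ω s = s * ω 1 := by
  rw [h0, sub_zero]
  refine ⟨fun h s => ?_, fun h i hi => by rw [h i, h (i - 1), Nat.cast_sub hi]; ring⟩
  induction s with
  | zero => simp [h0]
  | succ s ih =>
    have := h (s + 1) (by omega)
    rw [Nat.add_sub_cancel, ih] at this
    push_cast
    linarith

/-- A single-stage ω-Thiele rule (ω nondecreasing with
`ω(0) = 0`) satisfies Committee Monotonicity if and only if
`ω(i) − ω(i−1) = ω(1) − ω(0)` for all integers `i ≥ 1`, i.e. ω is linear. -/
theorem thiele_committee_monotone_iff_linear (ω : ℕ → ℝ)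
    (hmono : Monotone ω) (h0 : ω 0 = 0) :
    ThieleCommitteeMonotone ω ↔ ∀ i : ℕ, 1 ≤ i → ω i - ω (i - 1) = ω 1 - ω 0 := by
  rw [forall_sub_eq_iff_eq_mul h0]
  exact ⟨eq_mul_of_thieleCommitteeMonotone hmono h0, thieleCommitteeMonotone_of_eq_mul⟩
end

section
/- For every t ≥ 1, the t-stage rule applying Approval Voting (the ω-Thiele method with ω(x) = x) at every stage satisfies Committee Monotonicity. -/
/-!
Approval Voting scores a committee by the sum of its members' approval counts, so the AV
winning committees of size `k` on a pool `C` are exactly the top `k`-subsets of `C`: sets of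
`k` candidates none of whom is outscored by a candidate of `C` left out. A top `m`-subset of a
top `k`-subset of `C` is a top `m`-subset of `C`, and conversely every top `m`-subset of `C`
lies in some top `k`-subset when `m ≤ k`. Hence every stage chain collapses, and the `t`-stage
rule returns the top `k_t`-subsets of `C`. Adding a best remaining candidate to a top
`k`-subset, or removing a worst member from a top `(k + 1)`-subset, gives committee
monotonicity.
-/

open Finset

/-- Winning committees of the multi-stage ω-Thiele rule for stage vector `ks`,
applying the same ω-Thiele method with the same approval ballots at every stage:
the winning committee of each stage is the candidate pool of the next stage. -/
def msThiele {α : Type} [DecidableEq α] (ω : ℕ → ℝ) :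
    List ℕ → Finset α → List (Finset α) → Set (Finset α)
  | [], C, _ => {C}
  | k :: ks, C, V => {S | ∃ S₁ ∈ thieleWinners ω C V k, S ∈ msThiele ω ks S₁ V}

structure IsTopSubset {α β : Type*} [LE β] (w : α → β) (C : Finset α) (k : ℕ)
    (S : Finset α) : Prop where
  subset : S ⊆ C
  card_eq : S.card = k
  le_of_mem : ∀ s ∈ S, ∀ x ∈ C, x ∉ S → w x ≤ w s

namespace IsTopSubset

variable {α β : Type*} {w : α → β} {C S S₁ : Finset α} {k m : ℕ}

section Order

variable [LinearOrder β]

theorem trans (h₁ : IsTopSubset w C k S₁) (h : IsTopSubset w S₁ m S) :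
    IsTopSubset w C m S where
  subset := h.subset.trans h₁.subset
  card_eq := h.card_eq
  le_of_mem s hs x hx hxS := by
    by_cases hxS₁ : x ∈ S₁
    · exact h.le_of_mem s hs x hxS₁ hxS
    · exact h₁.le_of_mem s (h.subset hs) x hx hxS₁

theorem restrict (h : IsTopSubset w C m S) (hS : S ⊆ S₁) (hS₁ : S₁ ⊆ C) :
    IsTopSubset w S₁ m S :=
  ⟨hS, h.card_eq, fun s hs x hx hxS => h.le_of_mem s hs x (hS₁ hx) hxS⟩

variable [DecidableEq α]

theorem exists_insert (h : IsTopSubset w C k S) (hk : k < C.card) :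
    ∃ c ∈ C, c ∉ S ∧ IsTopSubset w C (k + 1) (insert c S) := by
  have hne : (C \ S).Nonempty := by
    rw [← card_pos, card_sdiff_of_subset h.subset, h.card_eq]; omega
  obtain ⟨c, hc, hmax⟩ := exists_max_image (C \ S) w hne
  obtain ⟨hcC, hcS⟩ := mem_sdiff.mp hc
  refine ⟨c, hcC, hcS, insert_subset hcC h.subset,
    by rw [card_insert_of_notMem hcS, h.card_eq], fun s hs x hx hxS => ?_⟩
  have hxS' : x ∉ S := fun hxS' => hxS (mem_insert_of_mem hxS')
  rcases mem_insert.mp hs with rfl | hs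
  · exact hmax x (mem_sdiff.mpr ⟨hx, hxS'⟩)
  · exact h.le_of_mem s hs x hx hxS'

theorem exists_erase (h : IsTopSubset w C (k + 1) S) :
    ∃ c ∈ S, IsTopSubset w C k (S.erase c) := by
  have hne : S.Nonempty := card_pos.mp (by rw [h.card_eq]; omega)
  obtain ⟨c, hc, hmin⟩ := exists_min_image S w hne
  refine ⟨c, hc, (erase_subset c S).trans h.subset,
    by rw [card_erase_of_mem hc, h.card_eq]; rfl, fun s hs x hx hxS => ?_⟩
  have hsS := mem_of_mem_erase hs
  by_cases hxc : x = c
  · exact hxc ▸ hmin s hsS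
  · exact h.le_of_mem s hsS x hx fun hxS' => hxS (mem_erase.mpr ⟨hxc, hxS'⟩)

theorem exists_superset (h : IsTopSubset w C m S) (hmk : m ≤ k) (hk : k ≤ C.card) :
    ∃ S₁, S ⊆ S₁ ∧ IsTopSubset w C k S₁ := by
  induction k, hmk using Nat.le_induction with
  | base => exact ⟨S, subset_rfl, h⟩
  | succ k _ ih =>
    obtain ⟨S₁, hSS₁, hS₁⟩ := ih (by omega)
    obtain ⟨c, -, -, hc⟩ := hS₁.exists_insert (by omega)
    exact ⟨insert c S₁, hSS₁.trans (subset_insert c S₁), hc⟩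

theorem exists_trans_iff (hmk : m ≤ k) (hk : k ≤ C.card) :
    (∃ S₁, IsTopSubset w C k S₁ ∧ IsTopSubset w S₁ m S) ↔ IsTopSubset w C m S := by
  refine ⟨fun ⟨_, h₁, h⟩ => h₁.trans h, fun h => ?_⟩
  obtain ⟨S₁, hSS₁, hS₁⟩ := h.exists_superset hmk hk
  exact ⟨S₁, hS₁, h.restrict hSS₁ hS₁.subset⟩

end Order

variable [DecidableEq α]

theorem sum_le [AddCommMonoid β] [LinearOrder β] [IsOrderedAddMonoid β]
    (h : IsTopSubset w C k S) {T : Finset α} (hTC : T ⊆ C) (hT : T.card = k) :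
    ∑ c ∈ T, w c ≤ ∑ c ∈ S, w c := by
  have hcard : (T \ S).card = (S \ T).card := card_sdiff_comm (hT.trans h.card_eq.symm)
  have houter : ∑ c ∈ T \ S, w c ≤ ∑ c ∈ S \ T, w c := by
    rcases (S \ T).eq_empty_or_nonempty with he | hne
    · rw [he, card_empty, card_eq_zero] at hcard
      rw [hcard, he]
    · -- every outsider in `T \ S` weighs at most the lightest member of `S \ T`
      obtain ⟨s₀, hs₀, hmin⟩ := exists_min_image (S \ T) w hne
      calc ∑ c ∈ T \ S, w c ≤ (T \ S).card • w s₀ :=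
            sum_le_card_nsmul _ _ _ fun x hx => h.le_of_mem s₀ (mem_sdiff.mp hs₀).1 x
              (hTC (mem_sdiff.mp hx).1) (mem_sdiff.mp hx).2
        _ = (S \ T).card • w s₀ := by rw [hcard]
        _ ≤ ∑ c ∈ S \ T, w c := card_nsmul_le_sum _ _ _ hmin
  rw [← sum_inter_add_sum_sdiff T S, ← sum_inter_add_sum_sdiff S T, inter_comm]
  gcongr

theorem of_forall_sum_le [AddCommMonoid β] [LinearOrder β] [IsOrderedCancelAddMonoid β]
    (hSC : S ⊆ C) (hS : S.card = k)
    (hmax : ∀ T ⊆ C, T.card = k → ∑ c ∈ T, w c ≤ ∑ c ∈ S, w c) :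
    IsTopSubset w C k S := by
  refine ⟨hSC, hS, fun s hs x hx hxS => ?_⟩
  have hxS' : x ∉ S.erase s := fun h => hxS (mem_of_mem_erase h)
  have hswap := hmax (insert x (S.erase s))
    (insert_subset hx ((erase_subset s S).trans hSC))
    (by rw [card_insert_of_notMem hxS', card_erase_of_mem hs, hS]
        exact Nat.sub_add_cancel (hS ▸ card_pos.mpr ⟨s, hs⟩))
  rwa [sum_insert hxS', ← add_sum_erase S w hs, add_le_add_iff_right] at hswap

end IsTopSubset

def approvalCount {α : Type} [DecidableEq α] (V : List (Finset α)) (c : α) : ℕ :=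
  V.countP (c ∈ ·)

section ApprovalVoting

variable {α : Type} [DecidableEq α]

theorem thieleScore_av (V : List (Finset α)) (S : Finset α) :
    thieleScore (fun x => (x : ℝ)) V S = ((∑ c ∈ S, approvalCount V c : ℕ) : ℝ) := by
  induction V with
  | nil => simp [thieleScore, approvalCount]
  | cons A V ih =>
    have hcount : ∀ c, approvalCount (A :: V) c = approvalCount V c + if c ∈ A then 1 else 0 :=
      fun c => by simp [approvalCount, List.countP_cons]
    simp only [thieleScore, List.map_cons, List.sum_cons, hcount] at ih ⊢
    rw [ih, sum_add_distrib, ← card_filter, filter_mem_eq_inter]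
    push_cast
    ring

theorem thieleWinners_av (C : Finset α) (V : List (Finset α)) (k : ℕ) :
    thieleWinners (fun x => (x : ℝ)) C V k = {S | IsTopSubset (approvalCount V) C k S} := by
  ext S
  simp only [thieleWinners, Set.mem_ofPred_eq, thieleScore_av, Nat.cast_le]
  exact ⟨fun ⟨hSC, hS, hmax⟩ => IsTopSubset.of_forall_sum_le hSC hS hmax,
    fun h => ⟨h.subset, h.card_eq, fun _ hTC hT => h.sum_le hTC hT⟩⟩

theorem msThiele_av (V : List (Finset α)) :
    ∀ (ks : List ℕ) (C : Finset α) (h : ks ≠ []), (C.card :: ks).IsChain (· > ·) →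
      msThiele (fun x => (x : ℝ)) ks C V =
        {S | IsTopSubset (approvalCount V) C (ks.getLast h) S}
  | [], _, h, _ => absurd rfl h
  | [k], C, _, _ => by
    ext S
    simp [msThiele, thieleWinners_av]
  | k :: k' :: ks, C, _, hchain => by
    have hne : k' :: ks ≠ [] := List.cons_ne_nil k' ks
    have hk : k < C.card := hchain.rel_cons List.mem_cons_self
    have hlast : (k' :: ks).getLast hne < k := (List.isChain_cons_cons.mp hchain).2.rel_cons
      (List.getLast_mem hne)
    ext S
    rw [msThiele, Set.mem_ofPred_eq, Set.mem_ofPred_eq, List.getLast_cons hne,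
      ← IsTopSubset.exists_trans_iff hlast.le hk.le, thieleWinners_av]
    refine exists_congr fun S₁ => and_congr_right fun h₁ => ?_
    rw [msThiele_av V (k' :: ks) S₁ hne (h₁.card_eq ▸ (List.isChain_cons_cons.mp hchain).2)]
    rfl

end ApprovalVoting

theorem multistage_av_committee_monotone_general
    (α : Type) [DecidableEq α] (C : Finset α) (V : List (Finset α))
    (ks₁ ks₂ : List ℕ) (h₁ : ks₁ ≠ []) (h₂ : ks₂ ≠ [])
    (hchain₁ : List.Chain (· > ·) C.card ks₁)
    (hchain₂ : List.Chain (· > ·) C.card ks₂)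
    (hlast : ks₁.getLast h₁ + 1 = ks₂.getLast h₂) :
    (∀ S ∈ msThiele (fun x => (x : ℝ)) ks₁ C V,
        ∃ S' ∈ msThiele (fun x => (x : ℝ)) ks₂ C V, S ⊂ S') ∧
    (∀ S ∈ msThiele (fun x => (x : ℝ)) ks₂ C V,
        ∃ S' ∈ msThiele (fun x => (x : ℝ)) ks₁ C V, S' ⊂ S) := by
  rw [msThiele_av V ks₁ C h₁ hchain₁, msThiele_av V ks₂ C h₂ hchain₂, ← hlast]
  have hlt : ks₁.getLast h₁ < C.card := hchain₁.rel_cons (List.getLast_mem h₁)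
  refine ⟨fun S hS => ?_, fun S hS => ?_⟩
  · obtain ⟨c, -, hcS, hc⟩ := IsTopSubset.exists_insert hS hlt
    exact ⟨insert c S, hc, ssubset_insert hcS⟩
  · obtain ⟨c, hc, hS'⟩ := IsTopSubset.exists_erase hS
    exact ⟨S.erase c, hS', erase_ssubset hc⟩

/-- For every `t ≥ 1`, the `t`-stage rule applying Approval
Voting (the ω-Thiele method with `ω(x) = x`) at every stage satisfies Committee
Monotonicity: for every election and all `t`-dimensional stage vectors `ks₁`,
`ks₂` with `k¹_t + 1 = k²_t`, every winning committee for `ks₁` extends to one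
for `ks₂`, and every winning committee for `ks₂` contains one for `ks₁`. -/
theorem multistage_av_committee_monotone
    (t : ℕ) (ht : 1 ≤ t)
    (α : Type) [DecidableEq α] (C : Finset α) (V : List (Finset α))
    (hV : ∀ A ∈ V, A ⊆ C)
    (ks₁ ks₂ : List ℕ) (h₁ : ks₁ ≠ []) (h₂ : ks₂ ≠ [])
    (hl₁ : ks₁.length = t) (hl₂ : ks₂.length = t)
    (hchain₁ : List.Chain (· > ·) C.card ks₁) (hpos₁ : ∀ k ∈ ks₁, 1 ≤ k)
    (hchain₂ : List.Chain (· > ·) C.card ks₂) (hpos₂ : ∀ k ∈ ks₂, 1 ≤ k)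
    (hlast : ks₁.getLast h₁ + 1 = ks₂.getLast h₂) :
    (∀ S ∈ msThiele (fun x => (x : ℝ)) ks₁ C V,
        ∃ S' ∈ msThiele (fun x => (x : ℝ)) ks₂ C V, S ⊂ S') ∧
    (∀ S ∈ msThiele (fun x => (x : ℝ)) ks₂ C V,
        ∃ S' ∈ msThiele (fun x => (x : ℝ)) ks₁ C V, S' ⊂ S) :=
  multistage_av_committee_monotone_general α C V ks₁ ks₂ h₁ h₂ hchain₁ hchain₂ hlast
end
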